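/- arXiv:1411.0508 — 6 statements merged into one kernel-verified Lean document; each statement's English description precedes it below -/
import Mathlib

section
/- Let G be a compact Hausdorff Abelian topological group with Haar probability measure m, let p be a prime number, and suppose there is a sequence (γ_i)_{i∈ℕ} of continuous characters of G, each of order exactly p, that are independent, i.e. the subgroup of the dual group generated by the γ_i is isomorphic to the countable direct sum ⊕_{i∈ℕ} ℤ/pℤ. Then for every strictly increasing sequence of natural numbers (n_k)_{k≥0} there exists a measurable function f : G → ℝ with f ∉ L¹(G,m) such that Γ_{f,0} = G, i.e. for every α ∈ G, for m-a.e. x, f(x + n_k·α)/k → 0 as k → ∞. -/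
open MeasureTheory Filter Finset
open scoped ENNReal Topology

/-!
Let `C i` be the common kernel of `γ 0, …, γ i`. Writing its indicator as
`∏ j ≤ i, p⁻¹ ∑ a < p, γ j ^ a` and using that a nontrivial character integrates to `0`,
independence gives `m (C i) = p⁻¹ ^ (i + 1)`; so `g = ∑ i, p ^ (i + 1) • 𝟙_{C i}` has infinite
integral. Every `C i` is invariant under translation by `p • α`, so the orbit `x + ℕ • α` meets
`C i` only if `x` lies in one of the `p` translates `C i - r • α`, `r < p`. Their total measure
is summable in `i`, hence by Borel–Cantelli almost every orbit meets only finitely many `C i`,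
and `g` is bounded along it, whatever the sequence `n` of times.
-/

theorem tsum_indicator_le_sum_range {X : Type*} {C : ℕ → Set X} {c : ℕ → ℝ≥0∞} {N : ℕ} {y : X}
    (hy : ∀ i, N ≤ i → y ∉ C i) :
    ∑' i, (C i).indicator (fun _ => c i) y ≤ ∑ i ∈ range N, c i := by
  rw [tsum_eq_sum (s := range N) fun i hi =>
    Set.indicator_of_notMem (hy i (by simpa using hi)) _]
  exact sum_le_sum fun i _ => Set.indicator_le_self _ _ y

section Orbits

variable {G : Type*} [AddGroup G] [MeasurableSpace G] [MeasurableAdd G]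
  {m : Measure G} [m.IsAddRightInvariant]

theorem ae_eventually_forall_add_nsmul_notMem {C : ℕ → Set G} {α : G} {p : ℕ} (hp : 0 < p)
    (hmod : ∀ i x (s : ℕ), x + s • α ∈ C i → x + (s % p) • α ∈ C i)
    (hsum : ∑' i, m (C i) ≠ ∞) :
    ∀ᵐ x ∂m, ∀ᶠ i in atTop, ∀ s : ℕ, x + s • α ∉ C i := by
  set D : ℕ → Set G := fun i => ⋃ r ∈ range p, (· + r • α) ⁻¹' C i
  have hD : ∀ i, m (D i) ≤ p * m (C i) := fun i => by
    refine (measure_biUnion_finset_le _ _).trans ?_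
    simp [measure_preimage_add_right]
  have hDsum : ∑' i, m (D i) ≠ ∞ := by
    refine ne_top_of_le_ne_top ?_ (ENNReal.tsum_le_tsum hD)
    rw [ENNReal.tsum_mul_left]
    exact ENNReal.mul_ne_top (ENNReal.natCast_ne_top p) hsum
  filter_upwards [ae_eventually_notMem hDsum] with x hx
  filter_upwards [hx] with i hi s hs
  exact hi (Set.mem_biUnion (mem_range.2 (Nat.mod_lt s hp)) (hmod i x s hs))

theorem ae_exists_bound_tsum_indicator_add_nsmul {C : ℕ → Set G} {c : ℕ → ℝ≥0∞}
    (hc : ∀ i, c i ≠ ∞) {α : G} {p : ℕ} (hp : 0 < p)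
    (hmod : ∀ i x (s : ℕ), x + s • α ∈ C i → x + (s % p) • α ∈ C i)
    (hsum : ∑' i, m (C i) ≠ ∞) :
    ∀ᵐ x ∂m, ∃ B ≠ ∞, ∀ s : ℕ, ∑' i, (C i).indicator (fun _ => c i) (x + s • α) ≤ B := by
  filter_upwards [ae_eventually_forall_add_nsmul_notMem hp hmod hsum] with x hx
  obtain ⟨N, hN⟩ := eventually_atTop.1 hx
  exact ⟨_, ENNReal.sum_ne_top.2 fun i _ => hc i,
    fun s => tsum_indicator_le_sum_range fun i hi => hN i hi s⟩

end Orbits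

theorem lintegral_tsum_indicator_const {X : Type*} [MeasurableSpace X] {μ : Measure X}
    {C : ℕ → Set X} (hC : ∀ i, MeasurableSet (C i)) (c : ℕ → ℝ≥0∞) :
    ∫⁻ x, ∑' i, (C i).indicator (fun _ => c i) x ∂μ = ∑' i, c i * μ (C i) := by
  rw [lintegral_tsum fun i => (measurable_const.indicator (hC i)).aemeasurable]
  simp_rw [lintegral_indicator_const (hC _)]

theorem tendsto_toReal_div_natCast_of_le {u : ℕ → ℝ≥0∞} {B : ℝ≥0∞} (hB : B ≠ ∞)
    (hu : ∀ k, u k ≤ B) : Tendsto (fun k : ℕ => (u k).toReal / k) atTop (𝓝 0) :=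
  squeeze_zero (fun k => by positivity)
    (fun k => div_le_div_of_nonneg_right (ENNReal.toReal_mono hB (hu k)) k.cast_nonneg)
    (tendsto_const_div_atTop_nhds_zero_nat B.toReal)

theorem inv_mul_geom_sum_eq_ite {K : Type*} [Field K] [DecidableEq K] {p : ℕ} (hp : (p : K) ≠ 0)
    {ζ : K} (hζ : ζ ^ p = 1) :
    (p : K)⁻¹ * ∑ a ∈ range p, ζ ^ a = if ζ = 1 then 1 else 0 := by
  split_ifs with h
  · simp [h, hp]
  · simp [geom_sum_eq h, hζ]

theorem map_add_nsmul {G M : Type*} [AddMonoid G] [Monoid M] {χ : G → M}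
    (hχ : ∀ x y, χ (x + y) = χ x * χ y) (x α : G) (s : ℕ) : χ (x + s • α) = χ x * χ α ^ s := by
  induction s with
  | zero => simp
  | succ s ih => rw [succ_nsmul, ← add_assoc, hχ, ih, pow_succ, mul_assoc]

theorem integral_eq_zero_of_map_add_eq_mul {G : Type*} [AddGroup G] [MeasurableSpace G]
    [MeasurableAdd G] {m : Measure G} [m.IsAddLeftInvariant] {χ : G → ℂ}
    (hχ : ∀ x y, χ (x + y) = χ x * χ y) {y : G} (hy : χ y ≠ 1) : ∫ x, χ x ∂m = 0 := by
  have h : (χ y - 1) * ∫ x, χ x ∂m = 0 := by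
    rw [sub_mul, one_mul, ← integral_const_mul]
    simp_rw [← hχ]
    rw [integral_add_left_eq_self, sub_self]
  exact (mul_eq_zero.1 h).resolve_left (sub_ne_zero.2 hy)

def commonKernel {ι G : Type*} (γ : ι → G → ℂ) (S : Finset ι) : Set G :=
  {x | ∀ j ∈ S, γ j x = 1}

section CommonKernel

variable {ι G : Type*} {γ : ι → G → ℂ} {p : ℕ}

theorem measurableSet_commonKernel [MeasurableSpace G] (hmeas : ∀ i, Measurable (γ i))
    (S : Finset ι) :
    MeasurableSet (commonKernel γ S) := by
  have : commonKernel γ S = ⋂ j ∈ S, γ j ⁻¹' {1} := by ext; simp [commonKernel]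
  exact this ▸ S.measurableSet_biInter fun j _ => hmeas j (measurableSet_singleton 1)

theorem add_nsmul_mem_commonKernel_iff [AddMonoid G]
    (hhom : ∀ i x y, γ i (x + y) = γ i x * γ i y) {α : G} (hα : ∀ i, γ i α ^ p = 1)
    {S : Finset ι} (x : G) (s : ℕ) :
    x + s • α ∈ commonKernel γ S ↔ x + (s % p) • α ∈ commonKernel γ S := by
  have hmod := fun j => pow_eq_pow_mod s (hα j)
  simp only [commonKernel, Set.mem_ofPred_eq, map_add_nsmul (hhom _), hmod]

theorem indicator_commonKernel_eq_prod (hp : p ≠ 0) (horder : ∀ i x, γ i x ^ p = 1)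
    (S : Finset ι) (x : G) :
    (commonKernel γ S).indicator (fun _ => 1) x =
      ∏ j ∈ S, (p : ℂ)⁻¹ * ∑ a ∈ range p, γ j x ^ a := by
  classical
  simp only [inv_mul_geom_sum_eq_ite (Nat.cast_ne_zero.2 hp) (horder _ x), prod_boole,
    Set.indicator_apply, commonKernel, Set.mem_ofPred_eq]

variable [DecidableEq ι]

theorem eq_zero_of_forall_prod_pow_eq_one
    (hindep : ∀ (s : Finset ι) (a : ι → ℤ),
      (∀ x, ∏ i ∈ s, γ i x ^ a i = 1) → ∀ i ∈ s, (p : ℤ) ∣ a i)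
    {S : Finset ι} {b : ∀ j ∈ S, ℕ} (hb : b ∈ S.pi fun _ => range p)
    (h1 : ∀ x, ∏ j ∈ S.attach, γ j x ^ b j j.2 = 1) : b = fun _ _ => 0 := by
  set a : ι → ℤ := fun j => if h : j ∈ S then b j h else 0
  have ha : ∀ x, ∏ j ∈ S, γ j x ^ a j = 1 := fun x => by
    rw [← prod_attach, ← h1 x]
    refine prod_congr rfl fun j _ => ?_
    simp [a, j.2]
  funext j hj
  have hdvd : (p : ℤ) ∣ b j hj := by simpa [a, hj] using hindep S a ha j hj
  exact Nat.eq_zero_of_dvd_of_lt (Int.ofNat_dvd.1 hdvd) (mem_range.1 (mem_pi.1 hb j hj))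

variable [AddGroup G] [MeasurableSpace G] [MeasurableAdd G] {m : Measure G}
  [IsProbabilityMeasure m] [m.IsAddLeftInvariant]

theorem integral_prod_pow_eq_ite (hhom : ∀ i x y, γ i (x + y) = γ i x * γ i y)
    (hindep : ∀ (s : Finset ι) (a : ι → ℤ),
      (∀ x, ∏ i ∈ s, γ i x ^ a i = 1) → ∀ i ∈ s, (p : ℤ) ∣ a i)
    {S : Finset ι} {b : ∀ j ∈ S, ℕ} (hb : b ∈ S.pi fun _ => range p) :
    ∫ x, ∏ j ∈ S.attach, γ j x ^ b j j.2 ∂m = if b = (fun _ _ => 0) then 1 else 0 := by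
  split_ifs with h
  · simp [h]
  have hχ : ∀ x y, ∏ j ∈ S.attach, γ j (x + y) ^ b j j.2 =
      (∏ j ∈ S.attach, γ j x ^ b j j.2) * ∏ j ∈ S.attach, γ j y ^ b j j.2 := fun x y => by
    simp only [hhom, mul_pow, prod_mul_distrib]
  obtain ⟨y, hy⟩ : ∃ y, ∏ j ∈ S.attach, γ j y ^ b j j.2 ≠ 1 := by
    by_contra! h1
    exact h (eq_zero_of_forall_prod_pow_eq_one hindep hb h1)
  exact integral_eq_zero_of_map_add_eq_mul hχ hy

theorem measure_commonKernel (hp : p ≠ 0) (hmeas : ∀ i, Measurable (γ i))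
    (hhom : ∀ i x y, γ i (x + y) = γ i x * γ i y) (hnorm : ∀ i x, ‖γ i x‖ = 1)
    (horder : ∀ i x, γ i x ^ p = 1)
    (hindep : ∀ (s : Finset ι) (a : ι → ℤ),
      (∀ x, ∏ i ∈ s, γ i x ^ a i = 1) → ∀ i ∈ s, (p : ℤ) ∣ a i)
    (S : Finset ι) : m (commonKernel γ S) = (p : ℝ≥0∞)⁻¹ ^ S.card := by
  have hint (b : ∀ j ∈ S, ℕ) : Integrable (fun x => ∏ j ∈ S.attach, γ j x ^ b j j.2) m :=
    .of_bound (Finset.measurable_prod _ fun j _ => (hmeas j.1).pow_const _).aestronglyMeasurable 1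
      (ae_of_all _ fun x => by simp [hnorm])
  have h : ((m (commonKernel γ S)).toReal : ℂ) = ((p : ℝ)⁻¹ ^ S.card : ℝ) := by
    calc ((m (commonKernel γ S)).toReal : ℂ)
        = ∫ x, (commonKernel γ S).indicator (fun _ => 1) x ∂m := by
          rw [integral_indicator_const _ (measurableSet_commonKernel hmeas S)]
          simp [Measure.real]
      _ = ∫ x, ∏ j ∈ S, (p : ℂ)⁻¹ * ∑ a ∈ range p, γ j x ^ a ∂m := by
          simp_rw [indicator_commonKernel_eq_prod hp horder]
      _ = (p : ℂ)⁻¹ ^ S.card *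
            ∑ b ∈ S.pi (fun _ => range p), ∫ x, ∏ j ∈ S.attach, γ j x ^ b j j.2 ∂m := by
          simp_rw [prod_mul_distrib, prod_const, prod_sum]
          rw [integral_const_mul, integral_finsetSum _ fun b _ => hint b]
      _ = ((p : ℝ)⁻¹ ^ S.card : ℝ) := by
          rw [sum_congr rfl fun b hb => integral_prod_pow_eq_ite hhom hindep hb, sum_ite_eq']
          simp [hp]
  rw [← ENNReal.ofReal_toReal (measure_ne_top m _), Complex.ofReal_inj.1 h, ENNReal.ofReal_pow,
    ENNReal.ofReal_inv_of_pos, ENNReal.ofReal_natCast] <;> positivity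

end CommonKernel

theorem exists_nonintegrable_with_full_tail_rotation_set_of_prime_torsion_general
    {G : Type*} [AddCommGroup G] [TopologicalSpace G] [IsTopologicalAddGroup G]
    [MeasurableSpace G] [BorelSpace G]
    (m : Measure G) [m.IsAddHaarMeasure] [IsProbabilityMeasure m]
    (p : ℕ) (hp : p.Prime)
    (γ : ℕ → G → ℂ)
    (hcont : ∀ i, Continuous (γ i))
    (hhom : ∀ i x y, γ i (x + y) = γ i x * γ i y)
    (hnorm : ∀ i x, ‖γ i x‖ = 1)
    (horder : ∀ i x, γ i x ^ p = 1)
    (hindep : ∀ (s : Finset ℕ) (a : ℕ → ℤ),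
      (∀ x, ∏ i ∈ s, γ i x ^ a i = 1) → ∀ i ∈ s, (p : ℤ) ∣ a i)
    (n : ℕ → ℕ) :
    ∃ f : G → ℝ, Measurable f ∧ ¬ Integrable f m ∧
      ∀ α : G, ∀ᵐ x ∂m,
        Tendsto (fun k : ℕ => f (x + n k • α) / (k : ℝ)) atTop (nhds 0) := by
  have hmeas i := (hcont i).measurable
  set C : ℕ → Set G := fun i => commonKernel γ (range (i + 1))
  have hCm i : m (C i) = (p : ℝ≥0∞)⁻¹ ^ (i + 1) := by
    simpa using measure_commonKernel hp.ne_zero hmeas hhom hnorm horder hindep (range (i + 1))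
  have hCsum : ∑' i, m (C i) ≠ ∞ := by
    simp only [hCm, ENNReal.tsum_geometric_add_one]
    refine ENNReal.mul_ne_top (by simp [hp.ne_zero]) (ENNReal.inv_ne_top.2 ?_)
    exact (tsub_pos_of_lt (ENNReal.inv_lt_one.2 (by exact_mod_cast hp.one_lt))).ne'
  set g : G → ℝ≥0∞ := fun x => ∑' i, (C i).indicator (fun _ => (p : ℝ≥0∞) ^ (i + 1)) x
  have hg : Measurable g :=
    .tsum fun i => measurable_const.indicator (measurableSet_commonKernel hmeas _)
  have hbounded (α : G) : ∀ᵐ x ∂m, ∃ B ≠ ∞, ∀ s : ℕ, g (x + s • α) ≤ B :=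
    ae_exists_bound_tsum_indicator_add_nsmul (fun i => by simp) hp.pos
      (fun i x s => (add_nsmul_mem_commonKernel_iff hhom (horder · α) x s).1) hCsum
  refine ⟨fun x => (g x).toReal, hg.ennreal_toReal, ?_, fun α => ?_⟩
  · have hfin : ∀ᵐ x ∂m, g x ≠ ∞ := by
      filter_upwards [hbounded 0] with x ⟨B, hB, hx⟩
      exact ne_top_of_le_ne_top hB (by simpa using hx 0)
    rw [integrable_toReal_iff hg.aemeasurable hfin, not_ne_iff,
      lintegral_tsum_indicator_const (C := C) fun i => measurableSet_commonKernel hmeas _]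
    simp [hCm, ← mul_pow, ENNReal.mul_inv_cancel, hp.ne_zero]
  · filter_upwards [hbounded α] with x ⟨B, hB, hx⟩
    exact tendsto_toReal_div_natCast_of_le hB fun k => hx (n k)

/-- **Theorem (multiple torsion of type (i)).**
If the dual group of the compact Hausdorff abelian group `G` contains a countable independent
family of continuous characters, each of order exactly `p` (so that the dual contains a
subgroup isomorphic to `⊕_{i∈ℕ} ℤ/pℤ`), then for every strictly increasing sequence `(n k)`
of naturals there is a measurable `f ∉ L¹(G, m)` with `Γ_{f,0} = G`. -/
theorem exists_nonintegrable_with_full_tail_rotation_set_of_prime_torsion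
    {G : Type*} [AddCommGroup G] [TopologicalSpace G] [IsTopologicalAddGroup G]
    [CompactSpace G] [T2Space G] [MeasurableSpace G] [BorelSpace G]
    (m : Measure G) [m.IsAddHaarMeasure] [IsProbabilityMeasure m]
    (p : ℕ) (hp : p.Prime)
    (γ : ℕ → G → ℂ)
    (hcont : ∀ i, Continuous (γ i))
    (hhom : ∀ i x y, γ i (x + y) = γ i x * γ i y)
    (hnorm : ∀ i x, ‖γ i x‖ = 1)
    (horder : ∀ i x, γ i x ^ p = 1)
    (hnontriv : ∀ i, ∃ x, γ i x ≠ 1)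
    (hindep : ∀ (s : Finset ℕ) (a : ℕ → ℤ),
      (∀ x, ∏ i ∈ s, γ i x ^ a i = 1) → ∀ i ∈ s, (p : ℤ) ∣ a i)
    (n : ℕ → ℕ) (hn : StrictMono n) :
    ∃ f : G → ℝ, Measurable f ∧ ¬ Integrable f m ∧
      ∀ α : G, ∀ᵐ x ∂m,
        Tendsto (fun k : ℕ => f (x + n k • α) / (k : ℝ)) atTop (nhds 0) :=
  exists_nonintegrable_with_full_tail_rotation_set_of_prime_torsion_general m p hp γ hcont hhom
    hnorm horder hindep n
end

section
/- Let G be a compact Hausdorff Abelian topological group with Haar probability measure m, and suppose there are infinitely many distinct primes p such that the dual group of G contains a subgroup isomorphic to (ℤ/pℤ) × (ℤ/pℤ), i.e. for each such p there are two independent continuous characters of G of order exactly p. Then for every strictly increasing sequence of natural numbers (n_k)_{k≥0} there exists a measurable function f : G → ℝ with f ∉ L¹(G,m) such that Γ_{f,0} = G, i.e. for every α ∈ G, for m-a.e. x, f(x + n_k·α)/k → 0 as k → ∞. -/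
open MeasureTheory Filter Topology
open scoped ENNReal

/-!
Each of the primes `p` yields, as the joint kernel of its two independent characters, a closed
subgroup `K_p` of index `p²`, hence of Haar measure `p⁻²`. Since `p • α ∈ K_p`, the orbit
`x + n k • α` can only meet `K_p` if `x` lies in one of the `p` translates `K_p - r • α`, a set
of measure at most `p⁻¹`. Taking primes `p_j ≥ 2 ^ j`, the function `∑ⱼ p_j² 𝟙_{K_{p_j}}` has
infinite integral, while by Borel–Cantelli, for every `α` and almost every `x`, the whole orbit of
`x` avoids all but finitely many `K_{p_j}`; so the function is bounded along the orbit.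
-/

namespace IsPrimitiveRoot

lemma pow_eq_pow_iff_natCast_eq {R : Type*} [CommMonoid R] {ζ : R} {p : ℕ} [NeZero p]
    (hζ : IsPrimitiveRoot ζ p) {a b : ℕ} : ζ ^ a = ζ ^ b ↔ (a : ZMod p) = b := by
  rw [ZMod.natCast_eq_natCast_iff, hζ.eq_orderOf]
  exact (hζ.isOfFinOrder (NeZero.ne p)).pow_eq_pow_iff_modEq

lemma exists_addMonoidHom_zmod_pow_val_eq {R : Type*} [CommRing R] [IsDomain R] {ζ : R} {p : ℕ}
    [NeZero p] (hζ : IsPrimitiveRoot ζ p) {G : Type*} [AddZeroClass G] {γ : G → R}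
    (hγ : ∀ x y, γ (x + y) = γ x * γ y) (hγp : ∀ x, γ x ^ p = 1) :
    ∃ u : G →+ ZMod p, ∀ x, ζ ^ (u x).val = γ x := by
  choose i hip hi using fun x => hζ.eq_pow_of_pow_eq_one (hγp x)
  refine ⟨AddMonoidHom.mk' (fun x => (i x : ZMod p)) fun x y => ?_, fun x => ?_⟩
  · rw [← Nat.cast_add, ← hζ.pow_eq_pow_iff_natCast_eq, pow_add, hi, hi, hi, hγ]
  · simp [ZMod.val_natCast, Nat.mod_eq_of_lt (hip x), hi]

lemma pow_val_eq_one_iff {R : Type*} [CommMonoid R] {ζ : R} {p : ℕ} [NeZero p]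
    (hζ : IsPrimitiveRoot ζ p) (i : ZMod p) : ζ ^ i.val = 1 ↔ i = 0 := by
  rw [← pow_zero ζ, hζ.pow_eq_pow_iff_natCast_eq, ZMod.natCast_zmod_val, Nat.cast_zero]

end IsPrimitiveRoot

lemma AddMonoidHom.exists_mul_fst_add_mul_snd_eq_zero_of_not_surjective {G : Type*}
    [AddCommGroup G] {p : ℕ} [Fact p.Prime] (e : G →+ ZMod p × ZMod p)
    (he : ¬ Function.Surjective e) :
    ∃ a b : ZMod p, (a, b) ≠ 0 ∧ ∀ x, a * (e x).1 + b * (e x).2 = 0 := by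
  have hlt : AddSubgroup.toZModSubmodule p e.range < ⊤ := by
    refine lt_top_iff_ne_top.mpr fun htop => he fun t => ?_
    have ht : t ∈ AddSubgroup.toZModSubmodule p e.range := htop ▸ Submodule.mem_top
    simpa using ht
  obtain ⟨f, hf, hker⟩ := Submodule.exists_le_ker_of_lt_top _ hlt
  have hf_apply : ∀ t : ZMod p × ZMod p, f t = f (1, 0) * t.1 + f (0, 1) * t.2 := by
    intro t
    have : t = t.1 • ((1 : ZMod p), (0 : ZMod p)) + t.2 • ((0 : ZMod p), (1 : ZMod p)) := by
      ext <;> simp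
    rw [this, map_add, map_smul, map_smul, smul_eq_mul, smul_eq_mul]
    simp [mul_comm]
  refine ⟨f (1, 0), f (0, 1), fun h => hf (LinearMap.ext fun t => ?_), fun x => ?_⟩
  · simp only [Prod.mk_eq_zero] at h
    simp [hf_apply t, h.1, h.2]
  · rw [← hf_apply]
    exact hker (by simp)

section IndependentCharacters

variable {G : Type*} [AddCommGroup G] {p : ℕ} [Fact p.Prime]

lemma surjective_prod_of_independent {K : Type*} [Field K] {ζ : K} (hζ : IsPrimitiveRoot ζ p)
    {γ₁ γ₂ : G → K} {u v : G →+ ZMod p} (hu : ∀ x, ζ ^ (u x).val = γ₁ x)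
    (hv : ∀ x, ζ ^ (v x).val = γ₂ x)
    (hind : ∀ a b : ℤ, (∀ x, γ₁ x ^ a * γ₂ x ^ b = 1) → (p : ℤ) ∣ a ∧ (p : ℤ) ∣ b) :
    Function.Surjective (u.prod v) := by
  by_contra he
  obtain ⟨a, b, hab, hrel⟩ := (u.prod v).exists_mul_fst_add_mul_snd_eq_zero_of_not_surjective he
  have hpow : ∀ x, γ₁ x ^ (a.val : ℤ) * γ₂ x ^ (b.val : ℤ) = 1 := by
    intro x
    rw [zpow_natCast, zpow_natCast, ← hu, ← hv, ← pow_mul, ← pow_mul, ← pow_add, ← pow_zero ζ,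
      hζ.pow_eq_pow_iff_natCast_eq]
    push_cast [ZMod.natCast_zmod_val]
    simpa [mul_comm] using hrel x
  obtain ⟨ha, hb⟩ := hind _ _ hpow
  rw [← ZMod.intCast_zmod_eq_zero_iff_dvd] at ha hb
  push_cast [ZMod.natCast_zmod_val] at ha hb
  exact hab (by simp [ha, hb])

theorem exists_addSubgroup_index_eq_sq_of_independent [TopologicalSpace G] [MeasurableSpace G]
    [OpensMeasurableSpace G] {γ₁ γ₂ : G → ℂ} (hc₁ : Continuous γ₁) (hc₂ : Continuous γ₂)
    (hadd₁ : ∀ x y, γ₁ (x + y) = γ₁ x * γ₁ y) (hadd₂ : ∀ x y, γ₂ (x + y) = γ₂ x * γ₂ y)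
    (hord₁ : ∀ x, γ₁ x ^ p = 1) (hord₂ : ∀ x, γ₂ x ^ p = 1)
    (hind : ∀ a b : ℤ, (∀ x, γ₁ x ^ a * γ₂ x ^ b = 1) → (p : ℤ) ∣ a ∧ (p : ℤ) ∣ b) :
    ∃ K : AddSubgroup G, MeasurableSet (K : Set G) ∧ K.index = p ^ 2 ∧ ∀ α : G, p • α ∈ K := by
  have hζ := Complex.isPrimitiveRoot_exp p (NeZero.ne p)
  obtain ⟨u, hu⟩ := hζ.exists_addMonoidHom_zmod_pow_val_eq hadd₁ hord₁
  obtain ⟨v, hv⟩ := hζ.exists_addMonoidHom_zmod_pow_val_eq hadd₂ hord₂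
  have hker : ((u.prod v).ker : Set G) = γ₁ ⁻¹' {1} ∩ γ₂ ⁻¹' {1} := by
    ext x
    simp [← hu, ← hv, hζ.pow_val_eq_one_iff, Prod.ext_iff]
  refine ⟨(u.prod v).ker, ?_, ?_, fun α => ?_⟩
  · rw [hker]
    exact ((measurableSet_singleton 1).preimage hc₁.measurable).inter
      ((measurableSet_singleton 1).preimage hc₂.measurable)
  · rw [AddSubgroup.index_ker,
      AddMonoidHom.range_eq_top.mpr (surjective_prod_of_independent hζ hu hv hind)]
    simp [sq]
  · simp [AddMonoidHom.mem_ker, Prod.ext_iff]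

end IndependentCharacters

section InvariantMeasure

variable {G : Type*} [AddCommGroup G] [MeasurableSpace G] [MeasurableAdd G] (μ : Measure G)
  [μ.IsAddLeftInvariant]

lemma measure_addSubgroup_eq_inv_index [IsProbabilityMeasure μ] (K : AddSubgroup G)
    (hK : MeasurableSet (K : Set G)) (hidx : K.index ≠ 0) : μ K = (K.index : ℝ≥0∞)⁻¹ := by
  have : K.FiniteIndex := ⟨hidx⟩
  have h := K.index_mul_measure hK μ
  rw [measure_univ] at h
  exact ENNReal.eq_inv_of_mul_eq_one_left (by rw [mul_comm, h])

lemma measure_setOf_exists_add_nsmul_mem_le (K : AddSubgroup G) {p : ℕ} (hp : 0 < p) {α : G}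
    (hα : p • α ∈ K) (N : ℕ → ℕ) : μ {x | ∃ k, x + N k • α ∈ K} ≤ p * μ K := by
  have hsub : {x | ∃ k, x + N k • α ∈ K} ⊆ ⋃ r ∈ Finset.range p, (fun x => r • α + x) ⁻¹' K := by
    rintro x ⟨k, hk⟩
    refine Set.mem_biUnion (Finset.mem_range.mpr (Nat.mod_lt (N k) hp)) ?_
    have hdecomp : N k • α = (N k % p) • α + (N k / p) • (p • α) := by
      rw [← mul_nsmul', ← add_nsmul, Nat.mod_add_div']
    rw [hdecomp, ← add_assoc] at hk
    simpa [add_comm] using (K.add_mem_cancel_right (K.nsmul_mem hα _)).mp hk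
  calc μ {x | ∃ k, x + N k • α ∈ K}
      ≤ ∑ r ∈ Finset.range p, μ ((fun x => r • α + x) ⁻¹' K) :=
        (measure_mono hsub).trans (measure_biUnion_finset_le _ _)
    _ = p * μ K := by simp [measure_preimage_add]

end InvariantMeasure

section IndicatorSeries

variable {X : Type*} {A : ℕ → Set X} {c : ℕ → ℝ≥0∞}

noncomputable def indicatorSeries (A : ℕ → Set X) (c : ℕ → ℝ≥0∞) (x : X) : ℝ≥0∞ :=
  ∑' j, (A j).indicator (fun _ => c j) x

lemma indicatorSeries_le_sum_range {x : X} {J : ℕ} (hx : ∀ j, J ≤ j → x ∉ A j) :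
    indicatorSeries A c x ≤ ∑ j ∈ Finset.range J, c j := by
  simp only [indicatorSeries]
  rw [tsum_eq_sum (s := Finset.range J) fun j hj =>
    Set.indicator_of_notMem (hx j (by simpa using hj)) _]
  exact Finset.sum_le_sum fun j _ => Set.indicator_le_self _ _ x

variable [MeasurableSpace X] {μ : Measure X}

lemma measurable_indicatorSeries (hA : ∀ j, MeasurableSet (A j)) :
    Measurable (indicatorSeries A c) :=
  Measurable.tsum fun j => measurable_const.indicator (hA j)

lemma lintegral_indicatorSeries (hA : ∀ j, MeasurableSet (A j)) :
    ∫⁻ x, indicatorSeries A c x ∂μ = ∑' j, c j * μ (A j) := by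
  simp only [indicatorSeries]
  rw [lintegral_tsum fun j => (measurable_const.indicator (hA j)).aemeasurable]
  simp [lintegral_indicator_const (hA _)]

lemma ae_indicatorSeries_ne_top (hc : ∀ j, c j ≠ ∞) (hA : ∑' j, μ (A j) ≠ ∞) :
    ∀ᵐ x ∂μ, indicatorSeries A c x ≠ ∞ := by
  filter_upwards [ae_eventually_notMem hA] with x hx
  obtain ⟨J, hJ⟩ := eventually_atTop.mp hx
  exact ne_top_of_le_ne_top (ENNReal.sum_ne_top.mpr fun j _ => hc j)
    (indicatorSeries_le_sum_range hJ)

lemma not_integrable_toReal_indicatorSeries (hA : ∀ j, MeasurableSet (A j)) (hc : ∀ j, c j ≠ ∞)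
    (hsum : ∑' j, μ (A j) ≠ ∞) (hint : ∑' j, c j * μ (A j) = ∞) :
    ¬ Integrable (fun x => (indicatorSeries A c x).toReal) μ := fun h =>
  (hasFiniteIntegral_toReal_iff (ae_indicatorSeries_ne_top hc hsum)).mp h.2
    (by rw [lintegral_indicatorSeries hA, hint])

lemma ae_tendsto_indicatorSeries_comp_div (hc : ∀ j, c j ≠ ∞) (g : ℕ → X → X)
    (hg : ∑' j, μ {x | ∃ k, g k x ∈ A j} ≠ ∞) :
    ∀ᵐ x ∂μ, Tendsto (fun k : ℕ => (indicatorSeries A c (g k x)).toReal / k) atTop (𝓝 0) := by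
  filter_upwards [ae_eventually_notMem hg] with x hx
  obtain ⟨J, hJ⟩ := eventually_atTop.mp hx
  have hbound : ∀ k, (indicatorSeries A c (g k x)).toReal ≤ (∑ j ∈ Finset.range J, c j).toReal :=
    fun k => ENNReal.toReal_mono (ENNReal.sum_ne_top.mpr fun j _ => hc j)
      (indicatorSeries_le_sum_range fun j hj hk => hJ j hj ⟨k, hk⟩)
  exact squeeze_zero (fun k => by positivity)
    (fun k => div_le_div_of_nonneg_right (hbound k) k.cast_nonneg)
    (tendsto_const_div_atTop_nhds_zero_nat _)

end IndicatorSeries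

lemma ENNReal.tsum_inv_ne_top_of_two_pow_le {p : ℕ → ℕ} (hp : ∀ j, 2 ^ j ≤ p j) :
    ∑' j, (p j : ℝ≥0∞)⁻¹ ≠ ∞ := by
  refine ne_top_of_le_ne_top (b := ∑' j : ℕ, 2⁻¹ ^ j) ?_ (ENNReal.tsum_le_tsum fun j => ?_)
  · simp [ENNReal.tsum_geometric]
  · rw [← ENNReal.inv_pow, ENNReal.inv_le_inv]
    exact_mod_cast hp j

theorem exists_not_integrable_forall_ae_tendsto_div_of_addSubgroups {G : Type*} [AddCommGroup G]
    [MeasurableSpace G] [MeasurableAdd G] (μ : Measure G) [μ.IsAddLeftInvariant]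
    [IsProbabilityMeasure μ] {p : ℕ → ℕ} (hp : ∀ j, 2 ^ j ≤ p j) {K : ℕ → AddSubgroup G}
    (hK : ∀ j, MeasurableSet (K j : Set G)) (hidx : ∀ j, (K j).index = p j ^ 2)
    (hpK : ∀ j α, p j • α ∈ K j) (n : ℕ → ℕ) :
    ∃ f : G → ℝ, Measurable f ∧ ¬ Integrable f μ ∧
      ∀ α : G, ∀ᵐ x ∂μ, Tendsto (fun k : ℕ => f (x + n k • α) / k) atTop (𝓝 0) := by
  have hp0 : ∀ j, 0 < p j := fun j => (Nat.one_le_two_pow).trans (hp j)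
  have hμK : ∀ j, μ (K j) = (p j : ℝ≥0∞)⁻¹ * (p j : ℝ≥0∞)⁻¹ := fun j => by
    rw [measure_addSubgroup_eq_inv_index μ _ (hK j) (by simp [hidx, (hp0 j).ne']), hidx]
    push_cast
    rw [sq, ENNReal.mul_inv (by simp) (by simp)]
  have hsum := ENNReal.tsum_inv_ne_top_of_two_pow_le hp
  have hμK_le : ∀ j, μ (K j) ≤ (p j : ℝ≥0∞)⁻¹ := fun j => by
    rw [hμK]
    exact mul_le_of_le_one_left' (ENNReal.inv_le_one.mpr (mod_cast hp0 j))
  have hbad : ∀ α j, μ {x | ∃ k, x + n k • α ∈ K j} ≤ (p j : ℝ≥0∞)⁻¹ := fun α j =>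
    (measure_setOf_exists_add_nsmul_mem_le μ (K j) (hp0 j) (hpK j α) n).trans_eq <| by
      rw [hμK, ← mul_assoc, ENNReal.mul_inv_cancel (by simp [(hp0 j).ne']) (by simp), one_mul]
  have hmass : ∑' j, (p j : ℝ≥0∞) ^ 2 * μ (K j) = ∞ := by
    have hone : ∀ j, (p j : ℝ≥0∞) ^ 2 * μ (K j) = 1 := fun j => by
      rw [hμK, sq, mul_mul_mul_comm, ENNReal.mul_inv_cancel (by simp [(hp0 j).ne']) (by simp),
        one_mul]
    simp only [hone]
    exact ENNReal.tsum_const_eq_top_of_ne_zero one_ne_zero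
  refine ⟨fun x => (indicatorSeries (fun j => K j) (fun j => (p j : ℝ≥0∞) ^ 2) x).toReal,
    (measurable_indicatorSeries hK).ennreal_toReal,
    not_integrable_toReal_indicatorSeries hK (fun j => by simp)
      (ne_top_of_le_ne_top hsum (ENNReal.tsum_le_tsum hμK_le)) hmass,
    fun α => ae_tendsto_indicatorSeries_comp_div (fun j => by simp) (fun k x => x + n k • α)
      (ne_top_of_le_ne_top hsum (ENNReal.tsum_le_tsum (hbad α)))⟩

theorem exists_nonintegrable_with_full_tail_rotation_set_of_many_primes_torsion_general
    {G : Type*} [AddCommGroup G] [TopologicalSpace G] [IsTopologicalAddGroup G]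
    [MeasurableSpace G] [BorelSpace G]
    (m : Measure G) [m.IsAddHaarMeasure] [IsProbabilityMeasure m]
    (htor : ∀ N : ℕ, ∃ p : ℕ, N < p ∧ p.Prime ∧
      ∃ γ₁ γ₂ : G → ℂ,
        Continuous γ₁ ∧ Continuous γ₂ ∧
        (∀ x y, γ₁ (x + y) = γ₁ x * γ₁ y) ∧ (∀ x y, γ₂ (x + y) = γ₂ x * γ₂ y) ∧
        (∀ x, ‖γ₁ x‖ = 1) ∧ (∀ x, ‖γ₂ x‖ = 1) ∧
        (∀ x, γ₁ x ^ p = 1) ∧ (∀ x, γ₂ x ^ p = 1) ∧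
        (∃ x, γ₁ x ≠ 1) ∧ (∃ x, γ₂ x ≠ 1) ∧
        (∀ a b : ℤ, (∀ x, γ₁ x ^ a * γ₂ x ^ b = 1) → (p : ℤ) ∣ a ∧ (p : ℤ) ∣ b))
    (n : ℕ → ℕ) :
    ∃ f : G → ℝ, Measurable f ∧ ¬ Integrable f m ∧
      ∀ α : G, ∀ᵐ x ∂m,
        Tendsto (fun k : ℕ => f (x + n k • α) / (k : ℝ)) atTop (nhds 0) := by
  have hsubgroups : ∀ j : ℕ, ∃ q : ℕ, 2 ^ j ≤ q ∧ ∃ K : AddSubgroup G,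
      MeasurableSet (K : Set G) ∧ K.index = q ^ 2 ∧ ∀ α : G, q • α ∈ K := by
    intro j
    obtain ⟨q, hjq, hq, γ₁, γ₂, hc₁, hc₂, hadd₁, hadd₂, -, -, hord₁, hord₂, -, -, hind⟩ :=
      htor (2 ^ j)
    have : Fact q.Prime := ⟨hq⟩
    exact ⟨q, hjq.le,
      exists_addSubgroup_index_eq_sq_of_independent hc₁ hc₂ hadd₁ hadd₂ hord₁ hord₂ hind⟩
  choose p hp K hK hidx hpK using hsubgroups
  exact exists_not_integrable_forall_ae_tendsto_div_of_addSubgroups m hp hK hidx hpK n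

/-- **Theorem (multiple torsion of type (ii)).**
If for infinitely many distinct primes `p` the dual group of the compact Hausdorff abelian
group `G` contains two independent continuous characters of order exactly `p` (i.e. a
subgroup isomorphic to `(ℤ/pℤ) × (ℤ/pℤ)`), then for every strictly increasing sequence
`(n k)` of naturals there is a measurable `f ∉ L¹(G, m)` with `Γ_{f,0} = G`. -/
theorem exists_nonintegrable_with_full_tail_rotation_set_of_many_primes_torsion
    {G : Type*} [AddCommGroup G] [TopologicalSpace G] [IsTopologicalAddGroup G]
    [CompactSpace G] [T2Space G] [MeasurableSpace G] [BorelSpace G]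
    (m : Measure G) [m.IsAddHaarMeasure] [IsProbabilityMeasure m]
    (htor : ∀ N : ℕ, ∃ p : ℕ, N < p ∧ p.Prime ∧
      ∃ γ₁ γ₂ : G → ℂ,
        Continuous γ₁ ∧ Continuous γ₂ ∧
        (∀ x y, γ₁ (x + y) = γ₁ x * γ₁ y) ∧ (∀ x y, γ₂ (x + y) = γ₂ x * γ₂ y) ∧
        (∀ x, ‖γ₁ x‖ = 1) ∧ (∀ x, ‖γ₂ x‖ = 1) ∧
        (∀ x, γ₁ x ^ p = 1) ∧ (∀ x, γ₂ x ^ p = 1) ∧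
        (∃ x, γ₁ x ≠ 1) ∧ (∃ x, γ₂ x ≠ 1) ∧
        (∀ a b : ℤ, (∀ x, γ₁ x ^ a * γ₂ x ^ b = 1) → (p : ℤ) ∣ a ∧ (p : ℤ) ∣ b))
    (n : ℕ → ℕ) (hn : StrictMono n) :
    ∃ f : G → ℝ, Measurable f ∧ ¬ Integrable f m ∧
      ∀ α : G, ∀ᵐ x ∂m,
        Tendsto (fun k : ℕ => f (x + n k • α) / (k : ℝ)) atTop (nhds 0) :=
  exists_nonintegrable_with_full_tail_rotation_set_of_many_primes_torsion_general m htor n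
end

section
/- Let G be a compact Hausdorff Abelian topological group with Haar probability measure m whose dual group contains infinitely many multiple torsion, and let (n_k)_{k≥0} be a strictly increasing sequence of natural numbers that is ergodic for periodic systems. Then there exists a measurable function f : G → ℝ with f ∉ L¹(G,m) such that Γ_f = G, i.e. for every α ∈ G, for m-a.e. x, the averages M_N^α f(x) = (1/(N+1)) · Σ_{k=0}^N f(x + n_k·α) converge as N → ∞. -/
/-!
Let `B_j` be the common kernel of a finite independent family of `d_j` continuous characters of
order `p_j`; averaging the products of their powers (character orthogonality) gives
`m(B_j) = p_j ^ (-d_j)`. The function `f = ∑ⱼ 1_{B_j} / m(B_j)` has infinite integral, one unit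
per term. Each `B_j` is invariant under `p_j • G`, so along an orbit `x + c • α` the set `B_j` is
met only according to the residue of `c` modulo `p_j`, and by Borel–Cantelli a.e. `x` meets
none of the `B_j` with `j` large as soon as `∑ⱼ p_j m(B_j) < ∞`. For such `x`,
`c ↦ f (x + c • α)` is a finite sum of periodic sequences, whose averages along an ergodic
sequence converge. A prime `p` with infinitely many independent characters (`d_j = j`), or
primes `p_j > 2 ^ j` with two independent characters each (`d_j = 2`), make `∑ⱼ p_j m(B_j)`
finite.
-/

open MeasureTheory Filter Finset Function Topology
open scoped ENNReal

def IsErgodicForPeriodicSystems (n : ℕ → ℕ) : Prop :=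
  ∀ q : ℕ, 0 < q → ∀ h : ℕ,
    Tendsto (fun N : ℕ =>
        (((range (N + 1)).filter (fun k => n k % q = h % q)).card : ℝ) / (N + 1))
      atTop (𝓝 (1 / (q : ℝ)))

/-- The set `Γ_f` of the paper. -/
def rotationSet {G : Type*} [AddMonoid G] [MeasurableSpace G] (m : Measure G) (n : ℕ → ℕ)
    (f : G → ℝ) : Set G :=
  {α | ∀ᵐ x ∂m, ∃ L : ℝ,
    Tendsto (fun N : ℕ => (∑ k ∈ range (N + 1), f (x + n k • α)) / (N + 1 : ℝ)) atTop (𝓝 L)}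

namespace IsErgodicForPeriodicSystems

variable {n : ℕ → ℕ}

theorem tendsto_average_of_periodic (hn : IsErgodicForPeriodicSystems n) {u : ℕ → ℝ} {q : ℕ}
    (hq : 0 < q) (hu : Periodic u q) :
    Tendsto (fun N : ℕ => (∑ k ∈ range (N + 1), u (n k)) / (N + 1 : ℝ))
      atTop (𝓝 (∑ r ∈ range q, u r / q)) := by
  have hfiber : ∀ N : ℕ, ∑ k ∈ range (N + 1), u (n k) =
      ∑ r ∈ range q, ((range (N + 1)).filter (fun k => n k % q = r)).card * u r := by
    intro N
    rw [← sum_fiberwise_of_maps_to (g := fun k => n k % q)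
      (fun k _ => mem_range.2 (Nat.mod_lt _ hq))]
    refine sum_congr rfl fun r _ => ?_
    rw [sum_congr rfl fun k hk => by rw [← hu.map_mod_nat, (mem_filter.1 hk).2],
      sum_const, nsmul_eq_mul]
  have hlim : ∀ r ∈ range q, Tendsto (fun N : ℕ =>
      ((range (N + 1)).filter (fun k => n k % q = r)).card / (N + 1 : ℝ) * u r)
      atTop (𝓝 (u r / q)) := by
    intro r hr
    have := (hn q hq r).mul_const (u r)
    rwa [Nat.mod_eq_of_lt (mem_range.1 hr), one_div_mul_eq_div] at this
  refine (tendsto_finsetSum _ hlim).congr fun N => ?_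
  rw [hfiber, sum_div]
  exact sum_congr rfl fun r _ => div_mul_eq_mul_div _ _ _

theorem exists_tendsto_average_of_eq_sum_periodic (hn : IsErgodicForPeriodicSystems n)
    {ι : Type*} (s : Finset ι) (q : ι → ℕ) (hq : ∀ i ∈ s, 0 < q i) {v : ι → ℕ → ℝ}
    (hv : ∀ i ∈ s, Periodic (v i) (q i))
    (u : ℕ → ℝ) (hu : ∀ c, u c = ∑ i ∈ s, v i c) :
    ∃ L, Tendsto (fun N : ℕ => (∑ k ∈ range (N + 1), u (n k)) / (N + 1 : ℝ)) atTop (𝓝 L) :=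
  ⟨_, (tendsto_finsetSum s fun i hi => hn.tendsto_average_of_periodic (hq i hi) (hv i hi)).congr
    fun N => by simp_rw [hu, sum_comm (s := range (N + 1)), sum_div]⟩

end IsErgodicForPeriodicSystems

section NormalizedIndicatorSum

variable {X : Type*} [MeasurableSpace X] (m : Measure X)

noncomputable def normalizedIndicatorSum (B : ℕ → Set X) (x : X) : ℝ≥0∞ :=
  ∑' j, (B j).indicator (fun _ => (m (B j))⁻¹) x

variable {m} {B : ℕ → Set X}

theorem measurable_normalizedIndicatorSum (hB : ∀ j, MeasurableSet (B j)) :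
    Measurable (normalizedIndicatorSum m B) :=
  Measurable.tsum fun j => measurable_const.indicator (hB j)

theorem normalizedIndicatorSum_eq_sum {x : X} {M : ℕ} (hx : ∀ j, M ≤ j → x ∉ B j) :
    normalizedIndicatorSum m B x = ∑ j ∈ range M, (B j).indicator (fun _ => (m (B j))⁻¹) x :=
  tsum_eq_sum fun j hj => Set.indicator_of_notMem (hx j (by simpa using hj)) _

theorem indicator_inv_measure_ne_top {S : Set X} (hS : m S ≠ 0) (x : X) :
    S.indicator (fun _ => (m S)⁻¹) x ≠ ∞ := by
  by_cases hx : x ∈ S <;> simp [hx, hS]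

theorem lintegral_normalizedIndicatorSum (hB : ∀ j, MeasurableSet (B j))
    (h0 : ∀ j, m (B j) ≠ 0) (htop : ∀ j, m (B j) ≠ ∞) :
    ∫⁻ x, normalizedIndicatorSum m B x ∂m = ∞ := by
  simp_rw [normalizedIndicatorSum]
  rw [lintegral_tsum fun j => (measurable_const.indicator (hB j)).aemeasurable]
  simp_rw [lintegral_indicator_const (hB _), ENNReal.inv_mul_cancel (h0 _) (htop _)]
  exact ENNReal.tsum_const_eq_top_of_ne_zero one_ne_zero

theorem not_integrable_normalizedIndicatorSum (hB : ∀ j, MeasurableSet (B j))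
    (h0 : ∀ j, m (B j) ≠ 0) (hsum : ∑' j, m (B j) ≠ ∞) :
    ¬ Integrable (fun x => (normalizedIndicatorSum m B x).toReal) m := by
  have hfin : ∀ᵐ x ∂m, normalizedIndicatorSum m B x ≠ ∞ := by
    filter_upwards [ae_eventually_notMem hsum] with x hx
    obtain ⟨M, hM⟩ := eventually_atTop.1 hx
    rw [normalizedIndicatorSum_eq_sum hM]
    exact ENNReal.sum_ne_top.2 fun j _ => indicator_inv_measure_ne_top (h0 j) x
  rw [integrable_toReal_iff (measurable_normalizedIndicatorSum hB).aemeasurable hfin, not_not]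
  exact lintegral_normalizedIndicatorSum hB h0 fun j =>
    ne_top_of_le_ne_top hsum (ENNReal.le_tsum j)

end NormalizedIndicatorSum

section PeriodicSets

variable {G : Type*} [AddCommGroup G]

theorem periodic_mem_add_nsmul {S : Set G} {q : ℕ} {α : G} (hS : ∀ y, y + q • α ∈ S ↔ y ∈ S)
    (x : G) : Periodic (fun c : ℕ => x + c • α ∈ S) q := fun c => by
  simp only [add_nsmul, ← add_assoc, hS]

theorem periodic_indicator_add_nsmul {M : Type*} [Zero M] {S : Set G} {q : ℕ} {α : G}
    (hS : ∀ y, y + q • α ∈ S ↔ y ∈ S) (b : M) (x : G) :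
    Periodic (fun c : ℕ => S.indicator (fun _ => b) (x + c • α)) q := fun c => by
  by_cases hx : x + c • α ∈ S <;> simp [add_nsmul, ← add_assoc, hx, hS]

variable [MeasurableSpace G] [MeasurableAdd G] {m : Measure G} [m.IsAddRightInvariant]
  {B : ℕ → Set G} {q : ℕ → ℕ}

theorem ae_eventually_forall_add_nsmul_notMem_s6 (hq : ∀ j, 0 < q j)
    (hper : ∀ j y α, y + q j • α ∈ B j ↔ y ∈ B j) (hsum : ∑' j, (q j : ℝ≥0∞) * m (B j) ≠ ∞)
    (α : G) : ∀ᵐ x ∂m, ∀ᶠ j in atTop, ∀ c : ℕ, x + c • α ∉ B j := by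
  set bad : ℕ → Set G := fun j => ⋃ r ∈ range (q j), (· + r • α) ⁻¹' B j
  have hbad : ∀ j, m (bad j) ≤ q j * m (B j) := fun j =>
    calc m (bad j) ≤ ∑ r ∈ range (q j), m ((· + r • α) ⁻¹' B j) := measure_biUnion_finset_le _ _
      _ = q j * m (B j) := by simp [measure_preimage_add_right]
  filter_upwards [ae_eventually_notMem (ne_top_of_le_ne_top hsum (ENNReal.tsum_le_tsum hbad))]
    with x hx
  filter_upwards [hx] with j hj c hc
  have hmod : x + (c % q j) • α ∈ B j :=
    (periodic_mem_add_nsmul (hper j · α) x).map_mod_nat c ▸ hc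
  exact hj (Set.mem_biUnion (mem_range.2 (Nat.mod_lt c (hq j))) hmod)

theorem exists_not_integrable_rotationSet_eq_univ_of_periodic {n : ℕ → ℕ}
    (hn : IsErgodicForPeriodicSystems n) (hB : ∀ j, MeasurableSet (B j)) (hq : ∀ j, 0 < q j)
    (hper : ∀ j y α, y + q j • α ∈ B j ↔ y ∈ B j) (h0 : ∀ j, m (B j) ≠ 0)
    (hsum : ∑' j, (q j : ℝ≥0∞) * m (B j) ≠ ∞) :
    ∃ f : G → ℝ, Measurable f ∧ ¬ Integrable f m ∧ rotationSet m n f = Set.univ := by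
  have hsum' : ∑' j, m (B j) ≠ ∞ := ne_top_of_le_ne_top hsum <| ENNReal.tsum_le_tsum fun j =>
    le_mul_of_one_le_left' (Nat.one_le_cast.2 (hq j))
  refine ⟨fun x => (normalizedIndicatorSum m B x).toReal,
    (measurable_normalizedIndicatorSum hB).ennreal_toReal,
    not_integrable_normalizedIndicatorSum hB h0 hsum', Set.eq_univ_of_forall fun α => ?_⟩
  show ∀ᵐ x ∂m, _
  filter_upwards [ae_eventually_forall_add_nsmul_notMem_s6 hq hper hsum α] with x hx
  obtain ⟨M, hM⟩ := eventually_atTop.1 hx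
  have hv : ∀ j ∈ range M, Periodic
      (fun c : ℕ => ((B j).indicator (fun _ => (m (B j))⁻¹) (x + c • α)).toReal) (q j) :=
    fun j _ => (periodic_indicator_add_nsmul (hper j · α) _ x).comp ENNReal.toReal
  refine hn.exists_tendsto_average_of_eq_sum_periodic (range M) q (fun j _ => hq j) hv
    (fun c => (normalizedIndicatorSum m B (x + c • α)).toReal) fun c => ?_
  rw [normalizedIndicatorSum_eq_sum fun j hj => hM j hj c,
    ENNReal.toReal_sum fun j _ => indicator_inv_measure_ne_top (h0 j) _]

end PeriodicSets

section Characters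

variable {G : Type*} [AddCommGroup G]

def addCharOfMapAddEqMul (γ : G → ℂ) (hadd : ∀ x y, γ (x + y) = γ x * γ y)
    (hnorm : ∀ x, ‖γ x‖ = 1) : AddChar G ℂ where
  toFun := γ
  map_zero_eq_one' := by
    have h0 : γ 0 ≠ 0 := norm_ne_zero_iff.1 (by simp [hnorm])
    exact mul_left_cancel₀ h0 (by rw [mul_one, ← hadd, add_zero])
  map_add_eq_mul' := hadd

theorem AddChar.map_add_nsmul_of_pow_eq_one {ψ : AddChar G ℂ} {q : ℕ} (hq : ∀ x, ψ x ^ q = 1)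
    (x α : G) : ψ (x + q • α) = ψ x := by
  rw [AddChar.map_add_eq_mul, AddChar.map_nsmul_eq_pow, hq, mul_one]

theorem sum_range_pow_of_pow_eq_one {z : ℂ} {p : ℕ} (hz : z ^ p = 1) :
    ∑ t ∈ range p, z ^ t = if z = 1 then (p : ℂ) else 0 := by
  split_ifs with h1
  · simp [h1]
  · rw [geom_sum_eq h1, hz, sub_self, zero_div]

theorem prod_sum_range_pow_addChar {ι : Type*} [Fintype ι] (ψ : ι → AddChar G ℂ) {p : ℕ}
    (hord : ∀ i x, ψ i x ^ p = 1) (x : G) :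
    ∏ i, ∑ t ∈ range p, ψ i x ^ t =
      {y | ∀ i, ψ i y = 1}.indicator (fun _ => (p : ℂ) ^ Fintype.card ι) x := by
  simp_rw [sum_range_pow_of_pow_eq_one (hord _ x)]
  by_cases hx : ∀ i, ψ i x = 1
  · simp [hx]
  · obtain ⟨i, hi⟩ := not_forall.1 hx
    rw [Set.indicator_of_notMem (show x ∉ {y | ∀ i, ψ i y = 1} from hx)]
    exact prod_eq_zero (mem_univ i) (if_neg hi)

theorem isClosed_setOf_forall_addChar_eq_one [TopologicalSpace G] {ι : Type*}
    {ψ : ι → AddChar G ℂ} (hc : ∀ i, Continuous (ψ i)) : IsClosed {x | ∀ i, ψ i x = 1} := by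
  simp only [Set.ofPred_forall]
  exact isClosed_iInter fun i => isClosed_eq (hc i) continuous_const

variable [MeasurableSpace G] [MeasurableAdd G] (m : Measure G) [m.IsAddRightInvariant]

theorem integral_addChar_eq_zero {ψ : AddChar G ℂ} (hψ : ψ ≠ 1) : ∫ x, ψ x ∂m = 0 := by
  obtain ⟨t, ht⟩ := not_forall.1 (mt AddChar.eq_one_iff.2 hψ)
  have hinv : (∫ x, ψ x ∂m) * ψ t = ∫ x, ψ x ∂m := by
    rw [← integral_mul_const]
    simp_rw [← AddChar.map_add_eq_mul]
    exact integral_add_right_eq_self (ψ ·) t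
  by_contra h0
  exact ht (mul_left_cancel₀ h0 (hinv.trans (mul_one _).symm))

variable [IsProbabilityMeasure m]

theorem integral_prod_pow_addChar {ι : Type*} [Fintype ι] (ψ : ι → AddChar G ℂ)
    {p : ℕ} (hind : ∀ a : ι → ℕ, (∀ x, ∏ i, ψ i x ^ a i = 1) → ∀ i, p ∣ a i)
    {a : ι → ℕ} (ha : ∀ i, a i < p) :
    ∫ x, ∏ i, ψ i x ^ a i ∂m = if a = 0 then 1 else 0 := by
  split_ifs with h0
  · simp [h0]
  · have hχ : ∏ i, ψ i ^ a i ≠ 1 := fun h1 => h0 <| funext fun i =>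
      Nat.eq_zero_of_dvd_of_lt (hind a (fun x => by simpa using congrArg (· x) h1) i) (ha i)
    simpa using integral_addChar_eq_zero m hχ

variable [TopologicalSpace G] [CompactSpace G] [BorelSpace G]

theorem measure_setOf_forall_addChar_eq_one {ι : Type*} [Fintype ι] (ψ : ι → AddChar G ℂ)
    (hc : ∀ i, Continuous (ψ i)) {p : ℕ} (hp : 0 < p) (hord : ∀ i x, ψ i x ^ p = 1)
    (hind : ∀ a : ι → ℕ, (∀ x, ∏ i, ψ i x ^ a i = 1) → ∀ i, p ∣ a i) :
    m {x | ∀ i, ψ i x = 1} = (p : ℝ≥0∞)⁻¹ ^ Fintype.card ι := by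
  classical
  set S := {x | ∀ i, ψ i x = 1}
  have hcont : ∀ a : ι → ℕ, Continuous fun x => ∏ i, ψ i x ^ a i := fun a =>
    continuous_finsetProd _ fun i _ => (hc i).pow _
  have hint : (p : ℂ) ^ Fintype.card ι * m.real S = 1 := by
    calc (p : ℂ) ^ Fintype.card ι * m.real S
        = ∫ x, S.indicator (fun _ => (p : ℂ) ^ Fintype.card ι) x ∂m := by
          rw [integral_indicator_const _ (isClosed_setOf_forall_addChar_eq_one hc).measurableSet,
            Complex.real_smul, mul_comm]
      _ = ∫ x, ∏ i, ∑ t ∈ range p, ψ i x ^ t ∂m := by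
          simp_rw [prod_sum_range_pow_addChar ψ hord, S]
      _ = ∑ a ∈ Fintype.piFinset fun _ => range p, ∫ x, ∏ i, ψ i x ^ a i ∂m := by
          simp_rw [prod_univ_sum]
          exact integral_finsetSum _ fun a _ =>
            (hcont a).integrable_of_hasCompactSupport (.of_compactSpace _)
      _ = 1 := by
          rw [sum_congr rfl fun a ha => integral_prod_pow_addChar m ψ hind
            fun i => mem_range.1 (Fintype.mem_piFinset.1 ha i)]
          simp [hp]
  have hreal : m.real S = ((p : ℝ≥0∞)⁻¹ ^ Fintype.card ι).toReal := by
    have hint' : (p : ℝ) ^ Fintype.card ι * m.real S = 1 := by exact_mod_cast hint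
    rw [eq_inv_of_mul_eq_one_right hint']
    simp
  exact (ENNReal.toReal_eq_toReal_iff' (measure_ne_top m S) (by simp [hp.ne'])).1 hreal

end Characters

section MultipleTorsion

variable {G : Type*} [AddCommGroup G] [TopologicalSpace G] [CompactSpace G] [MeasurableSpace G]
  [BorelSpace G] [MeasurableAdd G] (m : Measure G) [m.IsAddRightInvariant]
  [IsProbabilityMeasure m] {n : ℕ → ℕ}

theorem exists_not_integrable_rotationSet_eq_univ_of_addChar_families
    (hn : IsErgodicForPeriodicSystems n) {ι : ℕ → Type*} [∀ j, Fintype (ι j)]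
    (p : ℕ → ℕ) (hp : ∀ j, 0 < p j) (Γ : ∀ j, ι j → AddChar G ℂ)
    (hc : ∀ j i, Continuous (Γ j i)) (hord : ∀ j i x, Γ j i x ^ p j = 1)
    (hind : ∀ j (a : ι j → ℕ), (∀ x, ∏ i, Γ j i x ^ a i = 1) → ∀ i, p j ∣ a i)
    (hsum : ∑' j, (p j : ℝ≥0∞) * (p j : ℝ≥0∞)⁻¹ ^ Fintype.card (ι j) ≠ ∞) :
    ∃ f : G → ℝ, Measurable f ∧ ¬ Integrable f m ∧ rotationSet m n f = Set.univ := by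
  have hmeas j := measure_setOf_forall_addChar_eq_one m (Γ j) (hc j) (hp j) (hord j) (hind j)
  refine exists_not_integrable_rotationSet_eq_univ_of_periodic
    (B := fun j => {x | ∀ i, Γ j i x = 1}) hn
    (fun j => (isClosed_setOf_forall_addChar_eq_one (hc j)).measurableSet) hp
    (fun j y α => ?_) (fun j => by simp [hmeas j]) (by simpa [hmeas] using hsum)
  simp only [Set.mem_ofPred_eq, AddChar.map_add_nsmul_of_pow_eq_one (hord j _)]

theorem exists_not_integrable_rotationSet_eq_univ_of_independent_seq
    (hn : IsErgodicForPeriodicSystems n) {p : ℕ} (hp : 1 < p) (γ : ℕ → AddChar G ℂ)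
    (hc : ∀ i, Continuous (γ i)) (hord : ∀ i x, γ i x ^ p = 1)
    (hind : ∀ (s : Finset ℕ) (a : ℕ → ℤ),
      (∀ x, ∏ i ∈ s, γ i x ^ a i = 1) → ∀ i ∈ s, (p : ℤ) ∣ a i) :
    ∃ f : G → ℝ, Measurable f ∧ ¬ Integrable f m ∧ rotationSet m n f = Set.univ := by
  refine exists_not_integrable_rotationSet_eq_univ_of_addChar_families m hn (ι := Fin)
    (fun _ => p) (fun _ => by omega) (fun _ i => γ i) (fun _ i => hc i) (fun _ i => hord i)
    (fun j a ha i => ?_) ?_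
  · set A : ℕ → ℤ := fun i => if h : i < j then (a ⟨i, h⟩ : ℤ) else 0
    have hA : ∀ x, ∏ i ∈ range j, γ i x ^ A i = 1 := fun x => by
      rw [← Fin.prod_univ_eq_prod_range (fun i => γ i x ^ A i), ← ha x]
      simp [A]
    exact_mod_cast (by simpa [A] using hind (range j) A hA i (mem_range.2 i.2) : (p : ℤ) ∣ a i)
  · have hlt : (p : ℝ≥0∞)⁻¹ < 1 := ENNReal.inv_lt_one.2 (by exact_mod_cast hp)
    simp only [Fintype.card_fin, ENNReal.tsum_mul_left, ENNReal.tsum_geometric]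
    exact ENNReal.mul_ne_top (ENNReal.natCast_ne_top p)
      (ENNReal.inv_ne_top.2 (tsub_pos_of_lt hlt).ne')

theorem exists_not_integrable_rotationSet_eq_univ_of_independent_pairs
    (hn : IsErgodicForPeriodicSystems n) (p : ℕ → ℕ) (hp : ∀ k, 2 ^ k < p k)
    (γ₁ γ₂ : ℕ → AddChar G ℂ) (hc₁ : ∀ k, Continuous (γ₁ k)) (hc₂ : ∀ k, Continuous (γ₂ k))
    (hord₁ : ∀ k x, γ₁ k x ^ p k = 1) (hord₂ : ∀ k x, γ₂ k x ^ p k = 1)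
    (hind : ∀ k (a b : ℤ), (∀ x, γ₁ k x ^ a * γ₂ k x ^ b = 1) → (p k : ℤ) ∣ a ∧ (p k : ℤ) ∣ b) :
    ∃ f : G → ℝ, Measurable f ∧ ¬ Integrable f m ∧ rotationSet m n f = Set.univ := by
  have hp0 k : 0 < p k := (Nat.zero_le _).trans_lt (hp k)
  refine exists_not_integrable_rotationSet_eq_univ_of_addChar_families m hn (ι := fun _ => Fin 2)
    p hp0 (fun k => ![γ₁ k, γ₂ k]) (fun k i => by fin_cases i <;> simp [hc₁, hc₂])
    (fun k i => by fin_cases i <;> simp [hord₁, hord₂]) (fun k a ha => ?_) ?_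
  · obtain ⟨h₁, h₂⟩ := hind k (a 0) (a 1) fun x => by simpa [Fin.prod_univ_two] using ha x
    intro i
    fin_cases i
    · exact_mod_cast h₁
    · exact_mod_cast h₂
  · have hle k : (p k : ℝ≥0∞) * (p k : ℝ≥0∞)⁻¹ ^ Fintype.card (Fin 2) ≤ 2⁻¹ ^ k := by
      rw [Fintype.card_fin, sq, ← mul_assoc,
        ENNReal.mul_inv_cancel (by simp [(hp0 k).ne']) (by simp), one_mul, ← ENNReal.inv_pow,
        ENNReal.inv_le_inv]
      exact_mod_cast (hp k).le
    refine ne_top_of_le_ne_top ?_ (ENNReal.tsum_le_tsum hle)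
    simp [ENNReal.tsum_geometric, ENNReal.one_sub_inv_two]

end MultipleTorsion

theorem exists_nonintegrable_with_full_rotation_set_of_multiple_torsion_general
    {G : Type*} [AddCommGroup G] [TopologicalSpace G] [IsTopologicalAddGroup G]
    [CompactSpace G] [MeasurableSpace G] [BorelSpace G]
    (m : Measure G) [m.IsAddHaarMeasure] [IsProbabilityMeasure m]
    (htor :
      (∃ p : ℕ, p.Prime ∧ ∃ γ : ℕ → G → ℂ,
        (∀ i, Continuous (γ i)) ∧
        (∀ i x y, γ i (x + y) = γ i x * γ i y) ∧
        (∀ i x, ‖γ i x‖ = 1) ∧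
        (∀ i x, γ i x ^ p = 1) ∧
        (∀ i, ∃ x, γ i x ≠ 1) ∧
        (∀ (s : Finset ℕ) (a : ℕ → ℤ),
          (∀ x, ∏ i ∈ s, γ i x ^ a i = 1) → ∀ i ∈ s, (p : ℤ) ∣ a i)) ∨
      (∀ N : ℕ, ∃ p : ℕ, N < p ∧ p.Prime ∧
        ∃ γ₁ γ₂ : G → ℂ,
          Continuous γ₁ ∧ Continuous γ₂ ∧
          (∀ x y, γ₁ (x + y) = γ₁ x * γ₁ y) ∧ (∀ x y, γ₂ (x + y) = γ₂ x * γ₂ y) ∧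
          (∀ x, ‖γ₁ x‖ = 1) ∧ (∀ x, ‖γ₂ x‖ = 1) ∧
          (∀ x, γ₁ x ^ p = 1) ∧ (∀ x, γ₂ x ^ p = 1) ∧
          (∃ x, γ₁ x ≠ 1) ∧ (∃ x, γ₂ x ≠ 1) ∧
          (∀ a b : ℤ, (∀ x, γ₁ x ^ a * γ₂ x ^ b = 1) → (p : ℤ) ∣ a ∧ (p : ℤ) ∣ b)))
    (n : ℕ → ℕ)
    (hErg : ∀ q : ℕ, 0 < q → ∀ h : ℕ,
      Tendsto (fun N : ℕ =>
          (((Finset.range (N + 1)).filter (fun k => n k % q = h % q)).card : ℝ) / (N + 1))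
        atTop (nhds (1 / (q : ℝ)))) :
    ∃ f : G → ℝ, Measurable f ∧ ¬ Integrable f m ∧
      ∀ α : G, ∀ᵐ x ∂m, ∃ L : ℝ,
        Tendsto (fun N : ℕ => (∑ k ∈ Finset.range (N + 1), f (x + n k • α)) / (N + 1 : ℝ))
          atTop (nhds L) := by
  suffices ∃ f : G → ℝ, Measurable f ∧ ¬ Integrable f m ∧ rotationSet m n f = Set.univ by
    obtain ⟨f, hf, hfi, hΓ⟩ := this
    exact ⟨f, hf, hfi, Set.eq_univ_iff_forall.1 hΓ⟩
  rcases htor with ⟨p, hp, γ, hc, hadd, hnorm, hord, -, hind⟩ | hpairs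
  · exact exists_not_integrable_rotationSet_eq_univ_of_independent_seq m hErg hp.one_lt
      (fun i => addCharOfMapAddEqMul (γ i) (hadd i) (hnorm i)) hc hord hind
  · choose p hlt _ γ₁ γ₂ hc₁ hc₂ hadd₁ hadd₂ hnorm₁ hnorm₂ hord₁ hord₂ _ _ hind
      using fun k => hpairs (2 ^ k)
    exact exists_not_integrable_rotationSet_eq_univ_of_independent_pairs m hErg p hlt
      (fun k => addCharOfMapAddEqMul (γ₁ k) (hadd₁ k) (hnorm₁ k))
      (fun k => addCharOfMapAddEqMul (γ₂ k) (hadd₂ k) (hnorm₂ k)) hc₁ hc₂ hord₁ hord₂ hind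

/-- **Theorem (ergodic sequences and multiple torsion).**
Suppose the dual group of the compact Hausdorff abelian group `G` contains infinitely many
multiple torsion: either (i) there is a prime `p` and a countable independent family of
continuous characters of order exactly `p`, or (ii) for infinitely many distinct primes `p`
the dual contains two independent continuous characters of order exactly `p`. If `(n k)` is a
strictly increasing sequence of naturals which is ergodic for periodic systems, then there is
a measurable `f ∉ L¹(G, m)` such that `Γ_f = G`: for every `α`, the nonconventional Birkhoff
averages `(1/(N+1)) ∑_{k=0}^N f (x + n_k • α)` converge for a.e. `x`. -/
theorem exists_nonintegrable_with_full_rotation_set_of_multiple_torsion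
    {G : Type*} [AddCommGroup G] [TopologicalSpace G] [IsTopologicalAddGroup G]
    [CompactSpace G] [T2Space G] [MeasurableSpace G] [BorelSpace G]
    (m : Measure G) [m.IsAddHaarMeasure] [IsProbabilityMeasure m]
    (htor :
      (∃ p : ℕ, p.Prime ∧ ∃ γ : ℕ → G → ℂ,
        (∀ i, Continuous (γ i)) ∧
        (∀ i x y, γ i (x + y) = γ i x * γ i y) ∧
        (∀ i x, ‖γ i x‖ = 1) ∧
        (∀ i x, γ i x ^ p = 1) ∧
        (∀ i, ∃ x, γ i x ≠ 1) ∧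
        (∀ (s : Finset ℕ) (a : ℕ → ℤ),
          (∀ x, ∏ i ∈ s, γ i x ^ a i = 1) → ∀ i ∈ s, (p : ℤ) ∣ a i)) ∨
      (∀ N : ℕ, ∃ p : ℕ, N < p ∧ p.Prime ∧
        ∃ γ₁ γ₂ : G → ℂ,
          Continuous γ₁ ∧ Continuous γ₂ ∧
          (∀ x y, γ₁ (x + y) = γ₁ x * γ₁ y) ∧ (∀ x y, γ₂ (x + y) = γ₂ x * γ₂ y) ∧
          (∀ x, ‖γ₁ x‖ = 1) ∧ (∀ x, ‖γ₂ x‖ = 1) ∧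
          (∀ x, γ₁ x ^ p = 1) ∧ (∀ x, γ₂ x ^ p = 1) ∧
          (∃ x, γ₁ x ≠ 1) ∧ (∃ x, γ₂ x ≠ 1) ∧
          (∀ a b : ℤ, (∀ x, γ₁ x ^ a * γ₂ x ^ b = 1) → (p : ℤ) ∣ a ∧ (p : ℤ) ∣ b)))
    (n : ℕ → ℕ) (hn : StrictMono n)
    (hErg : ∀ q : ℕ, 0 < q → ∀ h : ℕ,
      Tendsto (fun N : ℕ =>
          (((Finset.range (N + 1)).filter (fun k => n k % q = h % q)).card : ℝ) / (N + 1))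
        atTop (nhds (1 / (q : ℝ)))) :
    ∃ f : G → ℝ, Measurable f ∧ ¬ Integrable f m ∧
      ∀ α : G, ∀ᵐ x ∂m, ∃ L : ℝ,
        Tendsto (fun N : ℕ => (∑ k ∈ Finset.range (N + 1), f (x + n k • α)) / (N + 1 : ℝ))
          atTop (nhds L) :=
  exists_nonintegrable_with_full_rotation_set_of_multiple_torsion_general m htor n hErg
end

section
/- Let p be a prime and ℤ_p the additive group of p-adic integers with Haar probability measure m; for a measurable f : ℤ_p → ℝ let Γ_{f,b} = {α ∈ ℤ_p : for m-a.e. x, limsup_{k→∞} |f(x + k·α)|/k < ∞}. Suppose that for every measurable function g : ℤ_p → ℝ, the existence of a measurable set B ⊆ Γ_{g,b} ∩ ℤ_p^× with m(B) > 0 (where ℤ_p^× is the set of p-adic units, i.e. those α whose first p-adic digit is nonzero) implies g ∈ L¹(ℤ_p, m). Then for every measurable function f : ℤ_p → ℝ, the existence of a measurable set B ⊆ Γ_{f,b} with m(B) > 0 implies f ∈ L¹(ℤ_p, m). -/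
open MeasureTheory Filter
open scoped ENNReal Topology

/-!
Split `ℤ_[p]` into the residue classes modulo `p ^ v` and parametrise each by the affine map
`x ↦ c + p ^ v x`. These maps rescale Haar measure by the same factor `p ^ v`, so `f` is
integrable as soon as every `f (c + p ^ v ·)` is. Since a Haar measure has no atoms, `B` meets some
sphere `‖α‖ = p ^ (-v)` in positive measure; dividing that piece by `p ^ v` gives a set of units of
positive measure, and growth along `β` of `f (c + p ^ v ·)` is growth along `p ^ v β` of `f`.
-/

section LinearGrowth

variable {G H : Type*} [AddMonoid G] [AddMonoid H] [MeasurableSpace G] [MeasurableSpace H]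

-- The set `Γ_{f,b}`.
def linearGrowthSet (μ : Measure G) (f : G → ℝ) : Set G :=
  {α | ∀ᵐ x ∂μ, limsup (fun k : ℕ => ENNReal.ofReal |f (x + k • α)| / (k : ℝ≥0∞)) atTop < ⊤}

theorem mem_linearGrowthSet_comp {μ : Measure G} {ν : Measure H} {T : G → H}
    (hT : Measure.QuasiMeasurePreserving T μ ν) {f : H → ℝ} {α : H} {β : G}
    (hTβ : ∀ x (k : ℕ), T (x + k • β) = T x + k • α) (hα : α ∈ linearGrowthSet ν f) :
    β ∈ linearGrowthSet μ (f ∘ T) :=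
  (hT.ae hα).mono fun x hx => by simpa only [Function.comp_apply, hTβ] using hx

end LinearGrowth

namespace PadicInt

variable {p : ℕ} [Fact p.Prime]

instance nhdsNE_zero_neBot : (𝓝[≠] (0 : ℤ_[p])).NeBot := by
  rw [← mem_closure_iff_nhdsWithin_neBot]
  refine mem_closure_of_tendsto (tendsto_pow_atTop_nhds_zero_of_norm_lt_one (x := (p : ℤ_[p])) ?_)
    (Eventually.of_forall fun n => pow_ne_zero n (NeZero.ne _))
  simp [norm_p, inv_lt_one_iff₀, Nat.Prime.one_lt Fact.out]

theorem toZModPow_eq_zero_of_norm_eq {α : ℤ_[p]} {v : ℕ} (h : ‖α‖ = (p : ℝ) ^ (-v : ℤ)) :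
    toZModPow v α = 0 := by
  rw [← RingHom.mem_ker, ker_toZModPow, ← norm_le_pow_iff_mem_span_pow]
  exact h.le

theorem exists_pos_measure_inter_norm_eq [MeasurableSpace ℤ_[p]] {μ : Measure ℤ_[p]}
    [NullSingletonClass μ] {B : Set ℤ_[p]} (hB : 0 < μ B) :
    ∃ v : ℕ, 0 < μ (B ∩ {α | ‖α‖ = (p : ℝ) ^ (-v : ℤ)}) := by
  by_contra! h
  have hcover : B ⊆ {0} ∪ ⋃ v : ℕ, B ∩ {α | ‖α‖ = (p : ℝ) ^ (-v : ℤ)} := by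
    intro α hα
    by_cases h0 : α = 0
    · exact Or.inl h0
    · exact Or.inr (Set.mem_iUnion.mpr ⟨α.valuation, hα, norm_eq_zpow_neg_valuation h0⟩)
  refine hB.ne' (measure_mono_null hcover (measure_union_null (measure_singleton 0) ?_))
  exact measure_iUnion_null fun v => nonpos_iff_eq_zero.mp (h v)

section CosetMap

variable (v : ℕ)

noncomputable def cosetMap (c : ZMod (p ^ v)) (x : ℤ_[p]) : ℤ_[p] := c.val + (p : ℤ_[p]) ^ v * x

theorem continuous_cosetMap (c : ZMod (p ^ v)) : Continuous (cosetMap v c) :=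
  continuous_const.add (continuous_const_mul _)

theorem toZModPow_natCast_val (c : ZMod (p ^ v)) : toZModPow v (c.val : ℤ_[p]) = c := by
  rw [map_natCast, ZMod.natCast_zmod_val]

theorem toZModPow_cosetMap (c : ZMod (p ^ v)) (x : ℤ_[p]) : toZModPow v (cosetMap v c x) = c := by
  simp only [cosetMap, map_add, map_mul, map_natCast, ← Nat.cast_pow, ZMod.natCast_self, zero_mul,
    add_zero, ZMod.natCast_zmod_val]

theorem cosetMap_zero : cosetMap v (0 : ZMod (p ^ v)) = ((p : ℤ_[p]) ^ v * ·) := by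
  funext x
  simp [cosetMap]

theorem cosetMap_add_nsmul (c : ZMod (p ^ v)) (x β : ℤ_[p]) (k : ℕ) :
    cosetMap v c (x + k • β) = cosetMap v c x + k • ((p : ℤ_[p]) ^ v * β) := by
  simp only [cosetMap, nsmul_eq_mul]
  ring

theorem exists_add_cosetMap (a : ℤ_[p]) (c : ZMod (p ^ v)) :
    ∃ d, ∀ x, a + cosetMap v c x = cosetMap v (c + toZModPow v a) (d + x) := by
  obtain ⟨d, hd⟩ : (p : ℤ_[p]) ^ v ∣ a + (c.val : ℤ_[p]) - (c + toZModPow v a).val := by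
    rw [← Ideal.mem_span_singleton, ← ker_toZModPow, RingHom.mem_ker, map_sub, map_add,
      toZModPow_natCast_val, toZModPow_natCast_val]
    ring
  refine ⟨d, fun x => ?_⟩
  simp only [cosetMap]
  linear_combination hd

variable [MeasurableSpace ℤ_[p]] [BorelSpace ℤ_[p]]

instance isAddLeftInvariant_sum_map_cosetMap (μ : Measure ℤ_[p]) [μ.IsAddLeftInvariant] :
    (∑ c : ZMod (p ^ v), μ.map (cosetMap v c)).IsAddLeftInvariant := by
  refine ⟨fun a => Measure.ext fun s hs => ?_⟩
  have hT (c : ZMod (p ^ v)) := (continuous_cosetMap (p := p) v c).measurable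
  simp only [Measure.map_apply (measurable_const_add a) hs, Measure.coe_finsetSum,
    Finset.sum_apply, Measure.map_apply (hT _) hs, Measure.map_apply (hT _)
      (hs.preimage (measurable_const_add a))]
  refine Fintype.sum_equiv (Equiv.addRight (toZModPow v a)) _ _ fun c => ?_
  obtain ⟨d, hd⟩ := exists_add_cosetMap v a c
  have hpre : cosetMap v c ⁻¹' ((a + ·) ⁻¹' s) =
      (d + ·) ⁻¹' (cosetMap v (c + toZModPow v a) ⁻¹' s) := by
    ext x
    simp only [Set.mem_preimage, hd x]
  rw [hpre, measure_preimage_add]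
  rfl

theorem sum_map_cosetMap (μ : Measure ℤ_[p]) [μ.IsAddHaarMeasure] :
    ∑ c : ZMod (p ^ v), μ.map (cosetMap v c) = ((p : ℝ≥0∞) ^ v) • μ := by
  set ν := ∑ c : ZMod (p ^ v), μ.map (cosetMap v c)
  have hν := Measure.isAddInvariant_eq_smul_of_compactSpace ν μ
  have huniv : ν Set.univ = (p : ℝ≥0∞) ^ v * μ Set.univ := by
    simp [ν, Measure.map_apply (continuous_cosetMap v _).measurable MeasurableSet.univ]
  have hfactor : (ν.addHaarScalarFactor μ : ℝ≥0∞) = (p : ℝ≥0∞) ^ v := by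
    have hμ := IsOpen.measure_ne_zero μ isOpen_univ Set.univ_nonempty
    rw [hν, Measure.smul_apply, ENNReal.smul_def, smul_eq_mul] at huniv
    exact (ENNReal.mul_left_inj hμ (measure_ne_top μ _)).mp huniv
  rw [hν, ENNReal.smul_def, hfactor]

theorem quasiMeasurePreserving_cosetMap (μ : Measure ℤ_[p]) [μ.IsAddHaarMeasure]
    (c : ZMod (p ^ v)) : Measure.QuasiMeasurePreserving (cosetMap v c) μ μ :=
  ⟨(continuous_cosetMap v c).measurable, Measure.absolutelyContinuous_of_le_smul <|
    (Finset.single_le_sum (fun _ _ => Measure.zero_le _) (Finset.mem_univ c)).trans_eq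
      (sum_map_cosetMap v μ)⟩

theorem measure_preimage_pow_mul (μ : Measure ℤ_[p]) [μ.IsAddHaarMeasure] {S : Set ℤ_[p]}
    (hS : MeasurableSet S) (hS0 : ∀ α ∈ S, toZModPow v α = 0) :
    μ (((p : ℤ_[p]) ^ v * ·) ⁻¹' S) = (p : ℝ≥0∞) ^ v * μ S := by
  have hsum := congrArg (· S) (sum_map_cosetMap v μ)
  simp only [Measure.coe_finsetSum, Finset.sum_apply, Measure.smul_apply, smul_eq_mul,
    Measure.map_apply (continuous_cosetMap v _).measurable hS] at hsum
  rw [← hsum, Fintype.sum_eq_single 0 fun c hc => ?_, cosetMap_zero]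
  refine measure_mono_null (fun x hx => hc ?_) measure_empty
  rw [← toZModPow_cosetMap v c x]
  exact hS0 _ hx

theorem integrable_of_forall_integrable_comp_cosetMap {E : Type*} [NormedAddCommGroup E]
    (μ : Measure ℤ_[p]) [μ.IsAddHaarMeasure] {f : ℤ_[p] → E} (hf : AEStronglyMeasurable f μ)
    (h : ∀ c, Integrable (f ∘ cosetMap v c) μ) : Integrable f μ := by
  have hsum : Integrable f (∑ c : ZMod (p ^ v), μ.map (cosetMap v c)) :=
    integrable_finsetSum_measure.mpr fun c _ =>
      (integrable_map_measure
        (hf.mono_ac (quasiMeasurePreserving_cosetMap v μ c).absolutelyContinuous)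
        (continuous_cosetMap v c).aemeasurable).mpr (h c)
  rw [sum_map_cosetMap] at hsum
  exact (integrable_smul_measure (by simp [NeZero.ne]) (by simp)).mp hsum

end CosetMap

end PadicInt

open PadicInt

theorem padic_reduction_to_unit_case_general
    (p : ℕ) [Fact p.Prime]
    [MeasurableSpace ℤ_[p]] [BorelSpace ℤ_[p]]
    (m : Measure ℤ_[p]) [m.IsAddHaarMeasure]
    (H : ∀ g : ℤ_[p] → ℝ, Measurable g →
      ∀ B : Set ℤ_[p], MeasurableSet B → 0 < m B →
      B ⊆ {α : ℤ_[p] | ∀ᵐ x ∂m,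
        limsup (fun k : ℕ => ENNReal.ofReal |g (x + k • α)| / (k : ℝ≥0∞)) atTop < ⊤}
          ∩ {α : ℤ_[p] | ‖α‖ = 1} →
      Integrable g m)
    (f : ℤ_[p] → ℝ) (hf : Measurable f)
    (B : Set ℤ_[p]) (hB : MeasurableSet B) (hBpos : 0 < m B)
    (hBsub : B ⊆ {α : ℤ_[p] | ∀ᵐ x ∂m,
      limsup (fun k : ℕ => ENNReal.ofReal |f (x + k • α)| / (k : ℝ≥0∞)) atTop < ⊤}) :
    Integrable f m := by
  obtain ⟨v, hv⟩ := exists_pos_measure_inter_norm_eq hBpos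
  set C := B ∩ {α : ℤ_[p] | ‖α‖ = (p : ℝ) ^ (-v : ℤ)}
  have hC : MeasurableSet C :=
    hB.inter ((measurableSet_singleton _).preimage continuous_norm.measurable)
  set B' := ((p : ℤ_[p]) ^ v * ·) ⁻¹' C
  have hB'pos : 0 < m B' := by
    rw [measure_preimage_pow_mul v m hC fun α hα => toZModPow_eq_zero_of_norm_eq hα.2]
    exact ENNReal.mul_pos (by simp [NeZero.ne]) hv.ne'
  refine integrable_of_forall_integrable_comp_cosetMap v m hf.aestronglyMeasurable fun c =>
    H _ (hf.comp (continuous_cosetMap v c).measurable) B'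
      (hC.preimage (continuous_const_mul _).measurable) hB'pos fun β hβ => ⟨?_, ?_⟩
  · exact mem_linearGrowthSet_comp (quasiMeasurePreserving_cosetMap v m c)
      (cosetMap_add_nsmul v c · β) (hBsub hβ.1)
  · have hβnorm : (p : ℝ) ^ (-v : ℤ) * ‖β‖ = (p : ℝ) ^ (-v : ℤ) := by
      simpa only [Set.mem_ofPred_eq, norm_mul, norm_p_pow] using hβ.2
    exact (mul_eq_left₀ (zpow_ne_zero _ (by simp [NeZero.ne]))).mp hβnorm

/-- **Claim (reduction to the unit case for `ℤ_p`).**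
Suppose that whenever `g : ℤ_p → ℝ` is measurable and some measurable set of positive measure
is contained in `Γ_{g,b} ∩ ℤ_p^×` (the `α`'s with nonzero zeroth `p`-adic digit, i.e. `‖α‖ = 1`),
it follows that `g ∈ L¹`. Then for every measurable `f : ℤ_p → ℝ`, from the existence of a
measurable set of positive measure contained in `Γ_{f,b}` it follows that `f ∈ L¹`. -/
theorem padic_reduction_to_unit_case
    (p : ℕ) [Fact p.Prime]
    [MeasurableSpace ℤ_[p]] [BorelSpace ℤ_[p]]
    (m : Measure ℤ_[p]) [m.IsAddHaarMeasure] [IsProbabilityMeasure m]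
    (H : ∀ g : ℤ_[p] → ℝ, Measurable g →
      ∀ B : Set ℤ_[p], MeasurableSet B → 0 < m B →
      B ⊆ {α : ℤ_[p] | ∀ᵐ x ∂m,
        limsup (fun k : ℕ => ENNReal.ofReal |g (x + k • α)| / (k : ℝ≥0∞)) atTop < ⊤}
          ∩ {α : ℤ_[p] | ‖α‖ = 1} →
      Integrable g m)
    (f : ℤ_[p] → ℝ) (hf : Measurable f)
    (B : Set ℤ_[p]) (hB : MeasurableSet B) (hBpos : 0 < m B)
    (hBsub : B ⊆ {α : ℤ_[p] | ∀ᵐ x ∂m,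
      limsup (fun k : ℕ => ENNReal.ofReal |f (x + k • α)| / (k : ℝ≥0∞)) atTop < ⊤}) :
    Integrable f m :=
  padic_reduction_to_unit_case_general p m H f hf B hB hBpos hBsub
end

section
/- Let (n_k)_{k≥0} be a strictly increasing sequence of natural numbers that is ergodic for periodic systems, let G be an Abelian group, let H be a subgroup of G of finite index, and let α, x ∈ G. Then the limit lim_{N→∞} (1/(N+1)) · Σ_{k=0}^N 1_H(x + n_k·α) exists, where 1_H denotes the indicator function of H and n_k·α the n_k-fold sum of α. -/
open Filter Finset Function

/-!
Modulo `H`, the orbit `m ↦ x + m • α` is periodic with period the order `q` of `α` in the finite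
group `G ⧸ H`, so `1_H (x + m • α)` depends only on `m % q`. Grouping the average by the residue
of `n k` modulo `q` turns it into a finite combination of the residue-class frequencies of `(n k)`,
each of which tends to `1 / q` by ergodicity.
-/

theorem AddSubgroup.add_add_addOrderOf_nsmul_mem_iff {G : Type*} [AddCommGroup G]
    (H : AddSubgroup G) (x α : G) (m : ℕ) :
    x + (m + addOrderOf (α : G ⧸ H)) • α ∈ H ↔ x + m • α ∈ H := by
  have hα : addOrderOf (α : G ⧸ H) • α ∈ H := by
    rw [← QuotientAddGroup.eq_zero_iff, QuotientAddGroup.mk_nsmul, addOrderOf_nsmul_eq_zero]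
  simp only [add_nsmul, ← add_assoc, H.add_mem_cancel_right hα]

theorem Function.Periodic.sum_comp_eq_sum_card_mod_mul {M : Type*} [NonAssocSemiring M]
    {f : ℕ → M} {q : ℕ} (hf : Periodic f q) (hq : 0 < q) (n : ℕ → ℕ) (s : Finset ℕ) :
    ∑ k ∈ s, f (n k) = ∑ h ∈ range q, #{k ∈ s | n k % q = h} * f h := by
  rw [← sum_fiberwise_of_maps_to (g := fun k => n k % q) fun k _ => mem_range.2 (Nat.mod_lt _ hq)]
  refine sum_congr rfl fun h _ => ?_
  rw [← nsmul_eq_mul, ← sum_const]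
  refine sum_congr rfl fun k hk => ?_
  rw [← (mem_filter.1 hk).2, hf.map_mod_nat]

theorem Function.Periodic.tendsto_average_comp {f : ℕ → ℝ} {q : ℕ} (hf : Periodic f q)
    (hq : 0 < q) (n : ℕ → ℕ)
    (hfreq : ∀ h : ℕ, Tendsto (fun N : ℕ =>
        ((#{k ∈ range (N + 1) | n k % q = h % q} : ℕ) : ℝ) / (N + 1)) atTop (nhds (1 / q))) :
    Tendsto (fun N : ℕ => (∑ k ∈ range (N + 1), f (n k)) / (N + 1))
      atTop (nhds ((∑ h ∈ range q, f h) / q)) := by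
  have hlim : Tendsto (fun N : ℕ => ∑ h ∈ range q,
      ((#{k ∈ range (N + 1) | n k % q = h} : ℕ) : ℝ) / (N + 1) * f h)
      atTop (nhds (∑ h ∈ range q, 1 / (q : ℝ) * f h)) := by
    refine tendsto_finsetSum _ fun h hh => Tendsto.mul_const _ ?_
    simpa only [Nat.mod_eq_of_lt (mem_range.1 hh)] using hfreq h
  rw [← mul_sum, one_div_mul_eq_div] at hlim
  refine hlim.congr fun N => ?_
  rw [hf.sum_comp_eq_sum_card_mod_mul hq, sum_div]
  exact sum_congr rfl fun h _ => div_mul_eq_mul_div _ _ _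

theorem ergodic_sequence_indicator_average_converges_general
    (n : ℕ → ℕ)
    (hErg : ∀ q : ℕ, 0 < q → ∀ h : ℕ,
      Tendsto (fun N : ℕ =>
          (((Finset.range (N + 1)).filter (fun k => n k % q = h % q)).card : ℝ) / (N + 1))
        atTop (nhds (1 / (q : ℝ))))
    {G : Type*} [AddCommGroup G] (H : AddSubgroup G) [H.FiniteIndex]
    (α x : G) :
    ∃ L : ℝ, Tendsto (fun N : ℕ =>
        (∑ k ∈ Finset.range (N + 1),
          Set.indicator (H : Set G) (fun _ => (1 : ℝ)) (x + n k • α)) / (N + 1 : ℝ))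
      atTop (nhds L) := by
  have : Finite (G ⧸ H) := H.finite_quotient_of_finiteIndex
  have hq : 0 < addOrderOf (α : G ⧸ H) := addOrderOf_pos _
  have hf : Periodic (fun m : ℕ => Set.indicator (H : Set G) (fun _ => (1 : ℝ)) (x + m • α))
      (addOrderOf (α : G ⧸ H)) := fun m =>
    Set.indicator_const_eq_indicator_const (H.add_add_addOrderOf_nsmul_mem_iff x α m)
  exact ⟨_, hf.tendsto_average_comp hq n (hErg _ hq)⟩

/-- **Convergence of averages of indicator functions of finite-index subgroups along ergodic
sequences.** If `(n k)` is a strictly increasing sequence of naturals which is ergodic for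
periodic systems, `G` is an abelian group, `H ≤ G` a subgroup of finite index, and
`α, x ∈ G`, then `(1/(N+1)) ∑_{k=0}^N 1_H (x + n_k • α)` converges as `N → ∞`. -/
theorem ergodic_sequence_indicator_average_converges
    (n : ℕ → ℕ) (hn : StrictMono n)
    (hErg : ∀ q : ℕ, 0 < q → ∀ h : ℕ,
      Tendsto (fun N : ℕ =>
          (((Finset.range (N + 1)).filter (fun k => n k % q = h % q)).card : ℝ) / (N + 1))
        atTop (nhds (1 / (q : ℝ))))
    {G : Type*} [AddCommGroup G] (H : AddSubgroup G) [H.FiniteIndex]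
    (α x : G) :
    ∃ L : ℝ, Tendsto (fun N : ℕ =>
        (∑ k ∈ Finset.range (N + 1),
          Set.indicator (H : Set G) (fun _ => (1 : ℝ)) (x + n k • α)) / (N + 1 : ℝ))
      atTop (nhds L) :=
  ergodic_sequence_indicator_average_converges_general n hErg H α x
end

section
/- Let p be a prime and let G = ℤ_p^ℕ be the countable product of copies of the additive group of p-adic integers, a compact Abelian topological group with Haar probability measure m. Then there exists a measurable function f : G → ℝ with f ∉ L¹(G,m) such that for every α ∈ G, for m-a.e. x, the ordinary Birkhoff averages (1/(N+1)) · Σ_{k=0}^N f(x + k·α) converge as N → ∞. In particular, the conclusion of the L¹ theorem for a single ℤ_p fails for countable products of ℤ_p. -/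
/-!
Every coordinate of `p • y` is divisible by `p`, so a function of `x` that depends only on the
residues of the coordinates `x i` modulo `p` is invariant under translation by `p • y`. Along an
orbit `x + k • α` it is then `p`-periodic in `k`, and the Cesàro means of a periodic sequence
converge. Unlike on a single `ℤ_p`, such a function need not be integrable, because
`G / pG = (ℤ/p)^ℕ` is infinite: the subgroup `K n` of points whose first `n` coordinates are
divisible by `p` has index `pⁿ`, hence Haar measure `p⁻ⁿ`, and `∑ n, pⁿ 𝟙_{K n}` has infinite
integral while being finite off the null set `⋂ n, K n`.
-/

open MeasureTheory Filter Topology Finset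
open scoped ENNReal

theorem Function.Periodic.tendsto_sum_range_div {φ : ℕ → ℝ} {P : ℕ} (hφ : Function.Periodic φ P)
    (hP : 0 < P) :
    Tendsto (fun N : ℕ => (∑ k ∈ range N, φ k) / N) atTop
      (𝓝 ((∑ k ∈ range P, φ k) / P)) := by
  set μ := (∑ k ∈ range P, φ k) / P
  set e : ℕ → ℝ := fun N => ∑ k ∈ range N, φ k - N * μ
  have he_periodic : Function.Periodic e P := by
    intro N
    induction N with
    | zero => simp [e, μ, mul_div_cancel₀ _ (Nat.cast_ne_zero.2 hP.ne' : (P : ℝ) ≠ 0)]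
    | succ N ih =>
      rw [add_right_comm]
      simp only [e, sum_range_succ, Nat.cast_succ, hφ N] at ih ⊢
      linarith
  have he_bdd : ∀ N, |e N| ≤ ∑ j ∈ range P, |e j| := fun N =>
    he_periodic.map_mod_nat N ▸ single_le_sum (f := fun j => |e j|) (fun j _ => abs_nonneg _)
      (mem_range.2 (Nat.mod_lt N hP))
  have he_div : Tendsto (fun N : ℕ => e N / N) atTop (𝓝 0) :=
    tendsto_bdd_div_atTop_nhds_zero (.of_forall fun N => (abs_le.1 (he_bdd N)).1)
      (.of_forall fun N => (abs_le.1 (he_bdd N)).2) tendsto_natCast_atTop_atTop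
  refine add_zero μ ▸ (he_div.const_add μ).congr' ?_
  filter_upwards [eventually_ne_atTop 0] with N hN
  field_simp [e]
  ring

theorem MeasureTheory.not_integrable_toReal_tsum_indicator {α : Type*} [MeasurableSpace α]
    {μ : Measure α} {s : ℕ → Set α} (hs : ∀ n, MeasurableSet (s n)) (hs_anti : Antitone s)
    (hs_null : μ (⋂ n, s n) = 0) {c : ℕ → ℝ≥0∞} (hc : ∀ n, c n ≠ ∞)
    (h_sum : ∑' n, c n * μ (s n) = ∞) :
    ¬ Integrable (fun x => (∑' n, (s n).indicator (fun _ => c n) x).toReal) μ := by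
  have h_meas : Measurable fun x => ∑' n, (s n).indicator (fun _ => c n) x :=
    .tsum fun n => measurable_const.indicator (hs n)
  have h_fin : ∀ᵐ x ∂μ, ∑' n, (s n).indicator (fun _ => c n) x ≠ ∞ := by
    filter_upwards [measure_eq_zero_iff_ae_notMem.1 hs_null] with x hx
    obtain ⟨N, hN⟩ : ∃ N, x ∉ s N := by simpa using hx
    rw [tsum_eq_sum (s := range N) fun n hn =>
      Set.indicator_of_notMem (fun h => hN (hs_anti (by simpa using hn) h)) _]
    exact ENNReal.sum_ne_top.2 fun n _ => by by_cases h : x ∈ s n <;> simp [h, hc n]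
  rw [integrable_toReal_iff h_meas.aemeasurable h_fin,
    lintegral_tsum fun n => (measurable_const.indicator (hs n)).aemeasurable]
  simpa [lintegral_indicator_const (hs _)] using h_sum

namespace PadicInt

variable (p : ℕ) [Fact p.Prime]

noncomputable def piToZMod (n : ℕ) : (ℕ → ℤ_[p]) →+ (Fin n → ZMod p) :=
  AddMonoidHom.pi fun i : Fin n =>
    toZMod.toAddMonoidHom.comp (Pi.evalAddMonoidHom (fun _ : ℕ => ℤ_[p]) i)

noncomputable def divisibilityWeight (x : ℕ → ℤ_[p]) : ℝ≥0∞ :=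
  ∑' n, ((piToZMod p n).ker : Set (ℕ → ℤ_[p])).indicator (fun _ => (p : ℝ≥0∞) ^ n) x

variable {p}

theorem toZMod_eq_zero_iff {z : ℤ_[p]} : toZMod z = 0 ↔ ‖z‖ < 1 := by
  rw [← RingHom.mem_ker, ker_toZMod, IsLocalRing.mem_maximalIdeal, mem_nonunits]

theorem mem_ker_piToZMod {n : ℕ} {x : ℕ → ℤ_[p]} :
    x ∈ (piToZMod p n).ker ↔ ∀ i < n, ‖x i‖ < 1 := by
  simp [piToZMod, funext_iff, toZMod_eq_zero_iff, Fin.forall_iff]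

theorem piToZMod_surjective (n : ℕ) : Function.Surjective (piToZMod p n) := fun v =>
  ⟨fun i => if h : i < n then ((v ⟨i, h⟩).val : ℤ_[p]) else 0, funext fun i => by simp [piToZMod]⟩

theorem antitone_ker_piToZMod : Antitone fun n => ((piToZMod p n).ker : Set (ℕ → ℤ_[p])) :=
  antitone_nat_of_succ_le fun n _ hx => mem_ker_piToZMod.2 fun i hi =>
    mem_ker_piToZMod.1 hx i (hi.trans n.lt_succ_self)

theorem isOpen_ker_piToZMod (n : ℕ) : IsOpen ((piToZMod p n).ker : Set (ℕ → ℤ_[p])) := by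
  have : ((piToZMod p n).ker : Set (ℕ → ℤ_[p])) =
      ⋂ i ∈ range n, (fun x => ‖x i‖) ⁻¹' Set.Iio 1 := by
    ext x
    rw [SetLike.mem_coe, mem_ker_piToZMod]
    simp
  rw [this]
  exact isOpen_biInter_finset fun i _ =>
    isOpen_Iio.preimage (continuous_norm.comp (continuous_apply i))

theorem index_ker_piToZMod (n : ℕ) : (piToZMod p n).ker.index = p ^ n := by
  rw [AddSubgroup.index_ker, AddMonoidHom.range_eq_top_of_surjective _ (piToZMod_surjective n)]
  simp

theorem nsmul_mem_ker_piToZMod (n : ℕ) (y : ℕ → ℤ_[p]) : p • y ∈ (piToZMod p n).ker := by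
  rw [AddMonoidHom.mem_ker, map_nsmul, ZModModule.char_nsmul_eq_zero]

section Haar

variable [MeasurableSpace (ℕ → ℤ_[p])] [BorelSpace (ℕ → ℤ_[p])]
  (m : Measure (ℕ → ℤ_[p])) [m.IsAddLeftInvariant] [IsProbabilityMeasure m]

theorem measure_ker_piToZMod (n : ℕ) : m (piToZMod p n).ker = ((p : ℝ≥0∞) ^ n)⁻¹ := by
  have h := AddSubgroup.index_mul_measure _ (isOpen_ker_piToZMod n).measurableSet m
  rw [index_ker_piToZMod, measure_univ, mul_comm] at h
  exact_mod_cast ENNReal.eq_inv_of_mul_eq_one_left h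

theorem measure_iInter_ker_piToZMod : m (⋂ n, ((piToZMod p n).ker : Set (ℕ → ℤ_[p]))) = 0 := by
  have h_lim : Tendsto (fun n => ((p : ℝ≥0∞) ^ n)⁻¹) atTop (𝓝 0) := by
    simp_rw [ENNReal.inv_pow]
    exact ENNReal.tendsto_pow_atTop_nhds_zero_of_lt_one
      (ENNReal.inv_lt_one.2 (by exact_mod_cast (Fact.out : p.Prime).one_lt))
  exact nonpos_iff_eq_zero.1 (ge_of_tendsto' h_lim fun n =>
    (measure_mono (Set.iInter_subset _ n)).trans_eq (measure_ker_piToZMod m n))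

theorem not_integrable_toReal_divisibilityWeight :
    ¬ Integrable (fun x => (divisibilityWeight p x).toReal) m := by
  refine not_integrable_toReal_tsum_indicator (fun n => (isOpen_ker_piToZMod n).measurableSet)
    antitone_ker_piToZMod (measure_iInter_ker_piToZMod m) (fun n => by simp) ?_
  have hp : (p : ℝ≥0∞) ≠ 0 := by exact_mod_cast (Fact.out : p.Prime).ne_zero
  simp_rw [measure_ker_piToZMod m,
    ENNReal.mul_inv_cancel (pow_ne_zero _ hp) (ENNReal.pow_ne_top (ENNReal.natCast_ne_top p))]
  exact ENNReal.tsum_const_eq_top_of_ne_zero one_ne_zero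

end Haar

theorem measurable_divisibilityWeight [MeasurableSpace (ℕ → ℤ_[p])] [BorelSpace (ℕ → ℤ_[p])] :
    Measurable (divisibilityWeight p) :=
  .tsum fun n => measurable_const.indicator (isOpen_ker_piToZMod n).measurableSet

theorem divisibilityWeight_add_nsmul (x y : ℕ → ℤ_[p]) :
    divisibilityWeight p (x + p • y) = divisibilityWeight p x := by
  refine tsum_congr fun n => ?_
  classical
  simp only [Set.indicator_apply, SetLike.mem_coe,
    add_mem_cancel_right (nsmul_mem_ker_piToZMod n y)]

end PadicInt

open PadicInt

/-- **Failure of the `L¹` theorem for countable products of `ℤ_p`.**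
Let `G = ℤ_p^ℕ` be the countable product of copies of the additive group of `p`-adic
integers, a compact abelian topological group with Haar probability measure `m`. Then there
is a measurable `f : G → ℝ` with `f ∉ L¹(G, m)` such that for every `α ∈ G` the ordinary
Birkhoff averages `(1/(N+1)) ∑_{k=0}^N f (x + k • α)` converge for `m`-a.e. `x`. -/
theorem product_padic_exists_nonintegrable_with_full_rotation_set
    (p : ℕ) [Fact p.Prime]
    [MeasurableSpace (ℕ → ℤ_[p])] [BorelSpace (ℕ → ℤ_[p])]
    (m : Measure (ℕ → ℤ_[p])) [m.IsAddHaarMeasure] [IsProbabilityMeasure m] :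
    ∃ f : (ℕ → ℤ_[p]) → ℝ, Measurable f ∧ ¬ Integrable f m ∧
      ∀ α : ℕ → ℤ_[p], ∀ᵐ x ∂m, ∃ L : ℝ,
        Tendsto (fun N : ℕ => (∑ k ∈ Finset.range (N + 1), f (x + k • α)) / (N + 1 : ℝ))
          atTop (nhds L) := by
  refine ⟨fun x => (divisibilityWeight p x).toReal, measurable_divisibilityWeight.ennreal_toReal,
    not_integrable_toReal_divisibilityWeight m, fun α => .of_forall fun x => ?_⟩
  have h_periodic : Function.Periodic (fun k : ℕ => (divisibilityWeight p (x + k • α)).toReal) p :=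
    fun k => by simp only [add_nsmul, ← add_assoc, divisibilityWeight_add_nsmul]
  exact ⟨_, (tendsto_add_atTop_iff_nat 1).2
    (h_periodic.tendsto_sum_range_div (Fact.out : p.Prime).pos) |>.congr fun N => by push_cast; rfl⟩
end
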